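/- arXiv:1607.02502 — 7 statements merged into one kernel-verified Lean document; each statement's English description precedes it below -/
import Mathlib

section
/- Let ℓ_i ≤ u_i be real numbers for i = 1,…,n, let D_n = {x ∈ ℝ^n : x_i ∈ [ℓ_i, u_i] for all i}, and let f_i : D_n → ℝ be continuous for each i. If for every i and every x ∈ D_n one has f_i(x_{−i}, ℓ_i) ≥ 0 and f_i(x_{−i}, u_i) ≤ 0 (where (x_{−i}, c) denotes x with its i-th coordinate replaced by c), then there exists x* ∈ D_n with f_i(x*) = 0 for all i = 1,…,n. -/
/-!
Subdivide the box into `Nⁿ` small cubes, triangulated by Kuhn's simplices, and label a grid point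
`z` by some `i` with `z i > 0` and `f i ≤ 0` at `z`, or by an extra label `n` if there is no such
`i`. The boundary conditions say that label `i` never occurs on the face `z i = 0` and the extra
label never on a face `z i = N`; by Kuhn's cubical Sperner lemma some simplex then carries all
`n + 1` labels. Its vertices give, for every `i`, points with `f i ≤ 0` and points with `f i ≥ 0`
within distance `O(1 / N)` of each other, and compactness and continuity yield a common zero as
`N → ∞`.

Kuhn's lemma (the number of fully labelled simplices is odd) goes by induction on `n`. Counted
simplex by simplex, the facets carrying exactly the labels other than `0` have the parity of the
fully labelled simplices. Those not in the boundary of the cube are paired off by passing to the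
other simplex through the facet, and those in the boundary are exactly the fully labelled
simplices of the face `x 0 = 0`, for the induced labelling.
-/

open Finset Function Equiv

namespace Finset

theorem even_card_of_involution {α : Type*} {s : Finset α} (g : α → α) (hg_mem : ∀ a ∈ s, g a ∈ s)
    (hg_ne : ∀ a ∈ s, g a ≠ a) (hg_invol : ∀ a ∈ s, g (g a) = a) : Even #s := by
  rw [← ZMod.natCast_eq_zero_iff_even, card_eq_sum_ones, Nat.cast_sum, Nat.cast_one]
  exact sum_involution (fun a _ => g a) (fun _ _ => by decide) (fun a ha _ => hg_ne a ha)
    hg_mem hg_invol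

variable {α β : Type*} [DecidableEq α] [DecidableEq β]

theorem image_erase_eq_image_iff {s : Finset α} {k : α} (hk : k ∈ s) {g : α → β} :
    (s.erase k).image g = s.image g ↔ ∃ j ∈ s, j ≠ k ∧ g j = g k := by
  constructor
  · intro h
    obtain ⟨j, hj, hjk⟩ := mem_image.1 (h ▸ mem_image_of_mem g hk)
    exact ⟨j, mem_of_mem_erase hj, ne_of_mem_erase hj, hjk⟩
  · rintro ⟨j, hj, hjk, hg⟩
    refine (image_subset_image (erase_subset k s)).antisymm fun y hy => ?_
    obtain ⟨i, hi, rfl⟩ := mem_image.1 hy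
    obtain rfl | hik := eq_or_ne i k
    · exact mem_image.2 ⟨j, mem_erase.2 ⟨hjk, hj⟩, hg⟩
    · exact mem_image_of_mem g (mem_erase.2 ⟨hik, hi⟩)

theorem card_filter_image_erase_eq_image {s : Finset α} {g : α → β} (hs : #(s.image g) + 1 = #s) :
    #{k ∈ s | (s.erase k).image g = s.image g} = 2 := by
  obtain ⟨a, ha, b, hb, hab, hg⟩ := exists_ne_map_eq_of_card_image_lt (s := s) (f := g) (by omega)
  have hinj : Set.InjOn g (s.erase a) := by
    refine injOn_of_card_image_eq ?_
    rw [(image_erase_eq_image_iff ha).2 ⟨b, hb, hab.symm, hg.symm⟩, card_erase_of_mem ha]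
    omega
  suffices {k ∈ s | (s.erase k).image g = s.image g} = {a, b} from this ▸ card_pair hab
  ext k
  simp only [mem_filter, mem_insert, mem_singleton]
  constructor
  · rintro ⟨hk, hdup⟩
    obtain ⟨j, hj, hjk, hgj⟩ := (image_erase_eq_image_iff hk).1 hdup
    by_contra! hne
    obtain rfl | hja := eq_or_ne j a
    · exact hne.2 (hinj (mem_erase.2 ⟨hne.1, hk⟩) (mem_erase.2 ⟨hab.symm, hb⟩) (hgj ▸ hg))
    · exact hjk (hinj (mem_erase.2 ⟨hja, hj⟩) (mem_erase.2 ⟨hne.1, hk⟩) hgj)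
  · rintro (rfl | rfl)
    · exact ⟨ha, (image_erase_eq_image_iff ha).2 ⟨b, hb, hab.symm, hg.symm⟩⟩
    · exact ⟨hb, (image_erase_eq_image_iff hb).2 ⟨a, ha, hab, hg⟩⟩

end Finset

section

variable {α β : Type*} [Fintype α] [Fintype β] [DecidableEq α] [DecidableEq β]

/-- The door count of Sperner's lemma for a single simplex with vertex labelling `g`. -/
theorem odd_card_filter_image_erase_eq_iff (hcard : Fintype.card α = Fintype.card β)
    (g : α → β) (z : β) :
    Odd #{k | (univ.erase k).image g = univ.erase z} ↔ Surjective g := by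
  by_cases hg : Surjective g
  · have hinj := ((Fintype.bijective_iff_surjective_and_card g).2 ⟨hg, hcard⟩).injective
    have hdoor : ∀ k, (univ.erase k).image g = univ.erase z ↔ g k = z := fun k => by
      rw [image_erase hinj, image_univ_of_surjective hg, erase_inj _ (mem_univ _)]
    obtain ⟨k₀, rfl⟩ := hg z
    simp_rw [hdoor, hinj.eq_iff, filter_eq', if_pos (mem_univ k₀), card_singleton]
    simpa using hg
  · simp only [hg, iff_false, Nat.not_odd_iff_even]
    obtain ⟨k₀, hk₀⟩ | hnone := em (∃ k, (univ.erase k).image g = univ.erase z)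
    · have hsub : univ.erase z ⊆ univ.image g := hk₀ ▸ image_subset_image (erase_subset k₀ univ)
      have hz : z ∉ univ.image g := fun hz => hg fun y => by
        obtain rfl | hyz := eq_or_ne y z
        · simpa using hz
        · simpa using hsub (mem_erase.2 ⟨hyz, mem_univ y⟩)
      have himage : univ.image g = univ.erase z :=
        Subset.antisymm (fun y hy => mem_erase.2 ⟨by rintro rfl; exact hz hy, mem_univ y⟩) hsub
      have hcount := card_filter_image_erase_eq_image (s := univ) (g := g) (by
        rw [himage, card_erase_of_mem (mem_univ z), card_univ, card_univ, ← hcard]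
        have : 0 < Fintype.card β := Fintype.card_pos_iff.2 ⟨z⟩
        omega)
      rw [himage] at hcount
      simp [hcount]
    · push Not at hnone
      simp [hnone]

end

namespace Fin

variable {n : ℕ}

theorem image_univ_erase_zero {γ : Type*} [DecidableEq γ] (g : Fin (n + 1) → γ) :
    (univ.erase 0).image g = univ.image (g ∘ Fin.succ) := by
  rw [← compl_singleton, ← Fin.image_succ_univ, image_image]

theorem image_univ_erase_last {γ : Type*} [DecidableEq γ] (g : Fin (n + 1) → γ) :
    (univ.erase (Fin.last n)).image g = univ.image (g ∘ Fin.castSucc) := by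
  rw [← compl_singleton, ← Fin.image_castSucc, image_image]

end Fin

theorem mul_inv_finRotate_apply_zero {n : ℕ} (π : Perm (Fin (n + 1))) :
    (π * (finRotate (n + 1))⁻¹) 0 = π (Fin.last n) := by
  rw [Perm.mul_apply, Perm.inv_eq_iff_eq.2 finRotate_last.symm]

namespace Kuhn

variable {n N : ℕ}

def grid (n N : ℕ) : Set (Fin n → ℕ) := {x | ∀ i, x i ≤ N}

/-- A simplex of Kuhn's triangulation of the cube `[0, N]ⁿ`: the lower corner `b` of the unit cube
containing it, and the order `π` in which its vertices step along the coordinate directions. -/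
abbrev Simplex (n N : ℕ) := (Fin n → Fin N) × Perm (Fin n)

/-- The `k`-th vertex `b + e (π 0) + ⋯ + e (π (k - 1))` of the simplex `(b, π)`. -/
def vertex (b : Fin n → Fin N) (π : Perm (Fin n)) (k : ℕ) : Fin n → ℕ :=
  fun i => b i + if (π.symm i : ℕ) < k then 1 else 0

theorem vertex_mem_grid (b : Fin n → Fin N) (π : Perm (Fin n)) (k : ℕ) :
    vertex b π k ∈ grid n N := fun i => by
  have := (b i).isLt
  unfold vertex
  split_ifs <;> omega

theorem vertex_apply_perm (b : Fin n → Fin N) (π : Perm (Fin n)) (k : ℕ) (t : Fin n) :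
    vertex b π k (π t) = b (π t) + if (t : ℕ) < k then 1 else 0 := by
  simp [vertex]

theorem abs_vertex_sub_vertex_zero_le (b : Fin n → Fin N) (π : Perm (Fin n)) (k : ℕ)
    (i : Fin n) : |(vertex b π k i : ℝ) - vertex b π 0 i| ≤ 1 := by
  simp only [vertex, Nat.not_lt_zero, if_false]
  split_ifs <;> norm_num

structure IsProperLabelling (N : ℕ) (lab : (Fin n → ℕ) → Fin (n + 1)) : Prop where
  ne_castSucc : ∀ x ∈ grid n N, ∀ i, x i = 0 → lab x ≠ i.castSucc
  ne_last : ∀ x ∈ grid n N, ∀ i, x i = N → lab x ≠ Fin.last n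

def IsFullyLabelled (lab : (Fin n → ℕ) → Fin (n + 1)) (σ : Simplex n N) : Prop :=
  Surjective fun k : Fin (n + 1) => lab (vertex σ.1 σ.2 k)

def facet (τ : Simplex n N × Fin (n + 1)) : Finset (Fin n → ℕ) :=
  (univ.erase τ.2).image fun j : Fin (n + 1) => vertex τ.1.1 τ.1.2 j

def IsDoor (lab : (Fin n → ℕ) → Fin (n + 1)) (τ : Simplex n N × Fin (n + 1)) : Prop :=
  (facet τ).image lab = univ.erase 0

open scoped Classical in
theorem card_isDoor_modEq_card_isFullyLabelled (lab : (Fin n → ℕ) → Fin (n + 1)) :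
    #{τ : Simplex n N × Fin (n + 1) | IsDoor lab τ} ≡
      #{σ : Simplex n N | IsFullyLabelled lab σ} [MOD 2] := by
  have hσ (σ : Simplex n N) : (#{k | IsDoor lab (σ, k)} : ZMod 2) =
      if IsFullyLabelled lab σ then 1 else 0 := by
    have h := odd_card_filter_image_erase_eq_iff (by simp)
      (fun k : Fin (n + 1) => lab (vertex σ.1 σ.2 k)) 0
    simp only [IsDoor, facet, image_image]
    split_ifs with hfull
    · exact ZMod.natCast_eq_one_iff_odd.2 (h.2 hfull)
    · exact ZMod.natCast_eq_zero_iff_even.2 (Nat.not_odd_iff_even.1 (mt h.1 hfull))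
  rw [← ZMod.natCast_eq_natCast_iff]
  calc (#{τ : Simplex n N × Fin (n + 1) | IsDoor lab τ} : ZMod 2)
      = ∑ σ : Simplex n N, (#{k | IsDoor lab (σ, k)} : ZMod 2) := by
        simp only [card_filter, Fintype.sum_prod_type, Nat.cast_sum]
    _ = #{σ : Simplex n N | IsFullyLabelled lab σ} := by
        simp only [hσ]
        simp only [card_filter, Nat.cast_sum, Nat.cast_ite, Nat.cast_one, Nat.cast_zero]

theorem vertex_mul_swap (b : Fin n → Fin N) (π : Perm (Fin n)) {a a' : Fin n}
    (ha : (a : ℕ) + 1 = a') {j : ℕ} (hj : j ≠ a') :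
    vertex b (π * swap a a') j = vertex b π j := by
  funext i
  have hsymm : (π * swap a a').symm i = swap a a' (π.symm i) := by
    rw [Perm.mul_def, symm_trans_apply, symm_swap]
  simp only [vertex, hsymm]
  rcases eq_or_ne (π.symm i) a with h | h
  · rw [h, swap_apply_left]
    grind
  · rcases eq_or_ne (π.symm i) a' with h' | h'
    · rw [h', swap_apply_right]
      grind
    · rw [swap_apply_of_ne_of_ne h h']

theorem vertex_mul_finRotate (b : Fin (n + 1) → Fin N) (π : Perm (Fin (n + 1))) {v : Fin N}
    (hv : (v : ℕ) = b (π 0) + 1) {j : ℕ} (hj : j ≤ n) :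
    vertex (Function.update b (π 0) v) (π * finRotate (n + 1)) j = vertex b π (j + 1) := by
  funext i
  have hsymm : (π * finRotate (n + 1)).symm i = (finRotate (n + 1)).symm (π.symm i) := by
    rw [Perm.mul_def, symm_trans_apply]
  simp only [vertex, hsymm]
  rcases eq_or_ne (π.symm i) 0 with h | h
  · obtain rfl : i = π 0 := by rw [← h, apply_symm_apply]
    simp [h, hv]
    omega
  · have hi : i ≠ π 0 := fun hi => h (by rw [hi, symm_apply_apply])
    rw [Function.update_of_ne hi, coe_finRotate_symm_of_ne_zero h]
    have := Fin.val_ne_zero_iff.2 h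
    grind

def stepUp (v : Fin N) : Fin N := if h : (v : ℕ) + 1 < N then ⟨v + 1, h⟩ else v

def stepDown (v : Fin N) : Fin N := ⟨v - 1, by omega⟩

/-- The other simplex of the triangulation containing `facet τ`, together with the index of its
vertex opposite that facet; for facets in the boundary of the cube the truncations in `stepUp` and
`stepDown` make the result meaningless. -/
def pivot (τ : Simplex (n + 1) N × Fin (n + 2)) : Simplex (n + 1) N × Fin (n + 2) :=
  let b := τ.1.1
  let π := τ.1.2
  if h₀ : τ.2 = 0 then
    ((Function.update b (π 0) (stepUp (b (π 0))), π * finRotate (n + 1)), Fin.last (n + 1))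
  else if hₗ : τ.2 = Fin.last (n + 1) then
    ((Function.update b (π (Fin.last n)) (stepDown (b (π (Fin.last n)))),
      π * (finRotate (n + 1))⁻¹), 0)
  else ((b, π * swap (τ.2.pred h₀) (τ.2.castPred hₗ)), τ.2)

/-- The facet opposite the first vertex lies in the hyperplane `x (π 0) = b (π 0) + 1`, the one
opposite the last vertex in `x (π n) = b (π n)`, and every other facet meets the interior of the
cube; so this says that `facet τ` is not contained in the boundary of the cube. -/
def IsInterior (τ : Simplex (n + 1) N × Fin (n + 2)) : Prop :=
  (τ.2 = 0 → (τ.1.1 (τ.1.2 0) : ℕ) + 1 < N) ∧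
    (τ.2 = Fin.last (n + 1) → (τ.1.1 (τ.1.2 (Fin.last n)) : ℕ) ≠ 0)

section Pivot

variable (b : Fin (n + 1) → Fin N) (π : Perm (Fin (n + 1)))

theorem pivot_zero (hb : (b (π 0) : ℕ) + 1 < N) :
    pivot ((b, π), 0) =
      ((Function.update b (π 0) ⟨b (π 0) + 1, hb⟩, π * finRotate (n + 1)), Fin.last (n + 1)) := by
  simp [pivot, stepUp, hb]

theorem pivot_last :
    pivot ((b, π), Fin.last (n + 1)) =
      ((Function.update b (π (Fin.last n)) (stepDown (b (π (Fin.last n)))),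
        π * (finRotate (n + 1))⁻¹), 0) := by
  simp [pivot, stepDown, (Fin.last_pos).ne']

theorem pivot_of_ne {k : Fin (n + 2)} (h₀ : k ≠ 0) (hₗ : k ≠ Fin.last (n + 1)) :
    pivot ((b, π), k) = ((b, π * swap (k.pred h₀) (k.castPred hₗ)), k) := by
  simp [pivot, h₀, hₗ]

theorem facet_pivot_zero (hb : (b (π 0) : ℕ) + 1 < N) :
    facet (pivot ((b, π), 0)) = facet ((b, π), 0) := by
  rw [pivot_zero b π hb, facet, facet, Fin.image_univ_erase_last, Fin.image_univ_erase_zero]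
  congr 1
  funext j
  exact vertex_mul_finRotate b π rfl (Nat.le_of_lt_succ j.isLt)

theorem pivot_pivot_zero (hb : (b (π 0) : ℕ) + 1 < N) :
    pivot (pivot ((b, π), 0)) = ((b, π), 0) := by
  rw [pivot_zero b π hb, pivot_last]
  simp [stepDown]

theorem isInterior_pivot_zero (hb : (b (π 0) : ℕ) + 1 < N) : IsInterior (pivot ((b, π), 0)) := by
  rw [pivot_zero b π hb]
  exact ⟨fun h => absurd h (Fin.last_pos).ne', fun _ => by simp⟩

theorem isInterior_pivot_last (hb : (b (π (Fin.last n)) : ℕ) ≠ 0) :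
    IsInterior (pivot ((b, π), Fin.last (n + 1))) := by
  rw [pivot_last]
  refine ⟨fun _ => ?_, fun h => absurd h.symm (Fin.last_pos).ne'⟩
  rw [mul_inv_finRotate_apply_zero]
  simp [stepDown]
  omega

theorem pivot_pivot_last (hb : (b (π (Fin.last n)) : ℕ) ≠ 0) :
    pivot (pivot ((b, π), Fin.last (n + 1))) = ((b, π), Fin.last (n + 1)) := by
  have hlt := (isInterior_pivot_last b π hb).1
  rw [pivot_last] at hlt ⊢
  rw [pivot_zero _ _ (hlt rfl)]
  have hv : (⟨stepDown (b (π (Fin.last n))) + 1, by simp [stepDown]; omega⟩ : Fin N) =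
      b (π (Fin.last n)) := by
    ext; simp [stepDown]; omega
  simp [mul_inv_finRotate_apply_zero, hv]

end Pivot

theorem IsInterior.pivot_spec {τ : Simplex (n + 1) N × Fin (n + 2)} (h : IsInterior τ) :
    IsInterior (pivot τ) ∧ pivot (pivot τ) = τ ∧ facet (pivot τ) = facet τ := by
  obtain ⟨⟨b, π⟩, k⟩ := τ
  rcases eq_or_ne k 0 with rfl | h₀
  · exact ⟨isInterior_pivot_zero b π (h.1 rfl), pivot_pivot_zero b π (h.1 rfl),
      facet_pivot_zero b π (h.1 rfl)⟩
  rcases eq_or_ne k (Fin.last (n + 1)) with rfl | hₗ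
  · have hb := h.2 rfl
    have hpp := pivot_pivot_last b π hb
    have hint := isInterior_pivot_last b π hb
    refine ⟨hint, hpp, ?_⟩
    rw [pivot_last] at hpp hint ⊢
    rw [← facet_pivot_zero _ _ (hint.1 rfl), hpp]
  · have ha : ((k.pred h₀ : Fin (n + 1)) : ℕ) + 1 = k.castPred hₗ := by
      simp only [Fin.val_pred, Fin.coe_castPred]
      have := Fin.val_ne_zero_iff.2 h₀
      omega
    rw [pivot_of_ne b π h₀ hₗ, pivot_of_ne _ _ h₀ hₗ, mul_assoc, swap_mul_self, mul_one]
    refine ⟨⟨fun h => absurd h h₀, fun h => absurd h hₗ⟩, rfl, ?_⟩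
    refine image_congr fun j hj => ?_
    refine vertex_mul_swap b π ha fun hjk => ?_
    rw [Fin.coe_castPred] at hjk
    exact (mem_erase.1 hj).1 (Fin.ext hjk)

theorem pivot_ne (τ : Simplex (n + 1) N × Fin (n + 2)) : pivot τ ≠ τ := by
  obtain ⟨⟨b, π⟩, k⟩ := τ
  unfold pivot
  dsimp only
  split_ifs with h₀ hₗ
  · simp [h₀]
  · simp [hₗ]
  · simp only [ne_eq, Prod.mk.injEq, mul_eq_left, swap_eq_one_iff, true_and, and_true]
    intro h
    have := congrArg Fin.val h
    simp only [Fin.val_pred, Fin.coe_castPred] at this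
    have := Fin.val_ne_zero_iff.2 h₀
    omega

theorem IsDoor.exists_vertex {lab : (Fin n → ℕ) → Fin (n + 1)} {τ : Simplex n N × Fin (n + 1)}
    (h : IsDoor lab τ) {c : Fin (n + 1)} (hc : c ≠ 0) :
    ∃ j ≠ τ.2, lab (vertex τ.1.1 τ.1.2 j) = c := by
  obtain ⟨x, hx, rfl⟩ := mem_image.1 (h ▸ mem_erase.2 ⟨hc, mem_univ c⟩ : c ∈ (facet τ).image lab)
  obtain ⟨j, hj, rfl⟩ := mem_image.1 hx
  exact ⟨j, ne_of_mem_erase hj, rfl⟩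

def consPerm (π : Perm (Fin n)) : Perm (Fin (n + 1)) :=
  Perm.decomposeFin.symm (0, π) * finRotate (n + 1)

theorem consPerm_last (π : Perm (Fin n)) : consPerm π (Fin.last n) = 0 := by
  simp [consPerm]

theorem consPerm_castSucc (π : Perm (Fin n)) (i : Fin n) : consPerm π i.castSucc = (π i).succ := by
  rw [consPerm, Perm.mul_apply, finRotate_apply, Fin.coeSucc_eq_succ,
    Perm.decomposeFin_symm_apply_succ, swap_self, refl_apply]

theorem consPerm_injective : Injective (consPerm (n := n)) := fun π π' h => by
  simpa using Perm.decomposeFin.symm.injective (mul_right_cancel h)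

theorem exists_consPerm_eq {π : Perm (Fin (n + 1))} (h : π (Fin.last n) = 0) :
    ∃ π', consPerm π' = π := by
  obtain ⟨⟨p, π'⟩, hp⟩ := Perm.decomposeFin.symm.surjective (π * (finRotate (n + 1))⁻¹)
  obtain rfl : p = 0 := by
    simpa [mul_inv_finRotate_apply_zero, h] using congrArg (· 0) hp
  exact ⟨π', by rw [consPerm, hp, inv_mul_cancel_right]⟩

theorem vertex_cons_consPerm [NeZero N] (b : Fin n → Fin N) (π : Perm (Fin n)) {j : ℕ}
    (hj : j ≤ n) : vertex (Fin.cons 0 b) (consPerm π) j = Fin.cons 0 (vertex b π j) := by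
  funext i
  refine Fin.cases ?_ (fun i => ?_) i
  · have h : (consPerm π).symm 0 = Fin.last n := (symm_apply_eq _).2 (consPerm_last π).symm
    simp [vertex, h]
    omega
  · have h : (consPerm π).symm i.succ = (π.symm i).castSucc :=
      (symm_apply_eq _).2 (by rw [consPerm_castSucc, apply_symm_apply])
    simp [vertex, h]

/-- The labelling induced on the face `x 0 = 0`, where the label `0` does not occur, with the
remaining labels shifted down by one. -/
def faceLabelling (lab : (Fin (n + 1) → ℕ) → Fin (n + 2)) (y : Fin n → ℕ) : Fin (n + 1) :=
  (0 : Fin (n + 1)).predAbove (lab (Fin.cons 0 y))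

theorem cons_mem_grid {y : Fin n → ℕ} (hy : y ∈ grid n N) :
    (Fin.cons 0 y : Fin (n + 1) → ℕ) ∈ grid (n + 1) N :=
  Fin.cases (Nat.zero_le N) hy

namespace IsProperLabelling

variable {lab : (Fin (n + 1) → ℕ) → Fin (n + 2)} (hlab : IsProperLabelling N lab)
include hlab

theorem lt_of_isDoor_zero {b : Fin (n + 1) → Fin N} {π : Perm (Fin (n + 1))}
    (h : IsDoor lab ((b, π), 0)) : (b (π 0) : ℕ) + 1 < N := by
  obtain ⟨j, hj, hlabj⟩ := h.exists_vertex (Fin.last_pos).ne'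
  by_contra hN
  refine hlab.ne_last _ (vertex_mem_grid b π j) (π 0) ?_ hlabj
  have := Fin.val_ne_zero_iff.2 hj
  have := (b (π 0)).isLt
  rw [vertex_apply_perm, Fin.val_zero, if_pos (by omega)]
  omega

theorem eq_zero_of_isDoor_last {b : Fin (n + 1) → Fin N} {π : Perm (Fin (n + 1))}
    (h : IsDoor lab ((b, π), Fin.last (n + 1)))
    (hb : (b (π (Fin.last n)) : ℕ) = 0) : π (Fin.last n) = 0 := by
  by_contra hπ
  obtain ⟨j, hj, hlabj⟩ := h.exists_vertex (c := (π (Fin.last n)).castSucc)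
    (by simpa using hπ)
  refine hlab.ne_castSucc _ (vertex_mem_grid b π j) (π (Fin.last n)) ?_ hlabj
  rw [vertex_apply_perm, hb, if_neg]
  simpa [Fin.lt_def] using Fin.val_lt_last hj

theorem succ_faceLabelling {y : Fin n → ℕ} (hy : y ∈ grid n N) :
    (faceLabelling lab y).succ = lab (Fin.cons 0 y) := by
  have h0 : lab (Fin.cons 0 y) ≠ 0 := hlab.ne_castSucc _ (cons_mem_grid hy) 0 rfl
  rw [faceLabelling, Fin.predAbove_zero_of_ne_zero h0, Fin.succ_pred]

theorem faceLabelling : IsProperLabelling N (faceLabelling lab) where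
  ne_castSucc y hy i hi h := hlab.ne_castSucc _ (cons_mem_grid hy) i.succ hi
    (by rw [← hlab.succ_faceLabelling hy, h, Fin.succ_castSucc])
  ne_last y hy i hi h := hlab.ne_last _ (cons_mem_grid hy) i.succ hi
    (by rw [← hlab.succ_faceLabelling hy, h, Fin.succ_last])

theorem isDoor_cons_iff [NeZero N] (b : Fin n → Fin N) (π : Perm (Fin n)) :
    IsDoor lab ((Fin.cons 0 b, consPerm π), Fin.last (n + 1)) ↔
      IsFullyLabelled (Kuhn.faceLabelling lab) (b, π) := by
  have hlabels : (facet ((Fin.cons 0 b, consPerm π), Fin.last (n + 1))).image lab =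
      (univ.image fun j : Fin (n + 1) => Kuhn.faceLabelling lab (vertex b π j)).image Fin.succ := by
    rw [facet, Fin.image_univ_erase_last, image_image, image_image]
    congr 1
    funext j
    simp only [Function.comp_apply, Fin.val_castSucc, vertex_cons_consPerm b π j.is_le,
      hlab.succ_faceLabelling (vertex_mem_grid b π j)]
  rw [IsDoor, hlabels, ← compl_singleton, ← Fin.image_succ_univ,
    (image_injective (Fin.succ_injective _)).eq_iff, IsFullyLabelled]
  simp [eq_univ_iff_forall, Surjective]

end IsProperLabelling

open scoped Classical in
theorem card_isDoor_not_isInterior [NeZero N] {lab : (Fin (n + 1) → ℕ) → Fin (n + 2)}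
    (hlab : IsProperLabelling N lab) :
    #{τ : Simplex (n + 1) N × Fin (n + 2) | IsDoor lab τ ∧ ¬IsInterior τ} =
      #{σ : Simplex n N | IsFullyLabelled (faceLabelling lab) σ} := by
  symm
  refine card_bij (fun σ _ => ((Fin.cons 0 σ.1, consPerm σ.2), Fin.last (n + 1))) ?_ ?_ ?_
  · rintro ⟨b, π⟩ hσ
    simp only [mem_filter, mem_univ, true_and] at hσ ⊢
    refine ⟨(hlab.isDoor_cons_iff b π).2 hσ, fun h => h.2 rfl ?_⟩
    simp [consPerm_last]
  · rintro ⟨b, π⟩ _ ⟨b', π'⟩ _ h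
    simp only [Prod.mk.injEq, Fin.cons_inj, true_and, and_true] at h
    rw [h.1, consPerm_injective h.2]
  · rintro ⟨⟨b, π⟩, k⟩ hτ
    simp only [mem_filter, mem_univ, true_and, IsInterior, not_and_or, Classical.not_imp] at hτ
    obtain ⟨hdoor, ⟨rfl, hb⟩ | ⟨rfl, hb⟩⟩ := hτ
    · exact absurd (hlab.lt_of_isDoor_zero hdoor) hb
    obtain ⟨π', rfl⟩ := exists_consPerm_eq (hlab.eq_zero_of_isDoor_last hdoor (not_not.1 hb))
    have hb0 : b 0 = 0 := Fin.ext (by simpa [consPerm_last] using hb)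
    rw [← Fin.cons_self_tail b, hb0] at hdoor ⊢
    exact ⟨(Fin.tail b, π'), by simpa using (hlab.isDoor_cons_iff _ _).1 hdoor, rfl⟩

open scoped Classical in
theorem odd_card_isFullyLabelled [NeZero N] :
    ∀ {n : ℕ} {lab : (Fin n → ℕ) → Fin (n + 1)}, IsProperLabelling N lab →
      Odd #{σ : Simplex n N | IsFullyLabelled lab σ}
  | 0, lab, _ => by
    have hfull (σ : Simplex 0 N) : IsFullyLabelled lab σ := fun _ =>
      ⟨0, Fin.subsingleton_one.elim _ _⟩
    simp [hfull]
  | n + 1, lab, hlab => by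
    have hinterior :
        Even #{τ : Simplex (n + 1) N × Fin (n + 2) | IsDoor lab τ ∧ IsInterior τ} := by
      refine even_card_of_involution pivot (fun τ hτ => ?_) (fun τ _ => pivot_ne τ)
        fun τ hτ => ?_
      · simp only [mem_filter, mem_univ, true_and] at hτ ⊢
        obtain ⟨hint, -, hfacet⟩ := hτ.2.pivot_spec
        exact ⟨by rw [IsDoor, hfacet]; exact hτ.1, hint⟩
      · exact (mem_filter.1 hτ).2.2.pivot_spec.2.1
    have hsplit : #{τ : Simplex (n + 1) N × Fin (n + 2) | IsDoor lab τ} =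
        #{τ : Simplex (n + 1) N × Fin (n + 2) | IsDoor lab τ ∧ IsInterior τ} +
          #{τ : Simplex (n + 1) N × Fin (n + 2) | IsDoor lab τ ∧ ¬IsInterior τ} := by
      rw [← card_filter_add_card_filter_not IsInterior, filter_filter, filter_filter]
    rw [← ZMod.natCast_eq_one_iff_odd,
      ← (ZMod.natCast_eq_natCast_iff _ _ 2).2 (card_isDoor_modEq_card_isFullyLabelled lab), hsplit,
      card_isDoor_not_isInterior hlab, Nat.cast_add, ZMod.natCast_eq_zero_iff_even.2 hinterior,
      zero_add, ZMod.natCast_eq_one_iff_odd]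
    exact odd_card_isFullyLabelled hlab.faceLabelling

theorem exists_isFullyLabelled [NeZero N] {lab : (Fin n → ℕ) → Fin (n + 1)}
    (hlab : IsProperLabelling N lab) : ∃ σ : Simplex n N, IsFullyLabelled lab σ := by
  classical
  obtain ⟨σ, hσ⟩ := card_pos.1 (odd_card_isFullyLabelled hlab).pos
  exact ⟨σ, (mem_filter.1 hσ).2⟩

end Kuhn

open Set Filter Topology

theorem IsCompact.exists_forall_mem_of_forall_exists_near {X ι : Type*} [PseudoMetricSpace X]
    {K : Set X} (hK : IsCompact K) {F : ι → Set X} (hF : ∀ i, IsClosed (F i))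
    (h : ∀ ε > 0, ∃ x ∈ K, ∀ i, ∃ y ∈ F i, dist y x ≤ ε) : ∃ x ∈ K, ∀ i, x ∈ F i := by
  choose x hxK y hyF hy using fun m : ℕ => h (1 / (m + 1)) Nat.one_div_pos_of_nat
  obtain ⟨x₀, hx₀, φ, hφ, hlim⟩ := hK.tendsto_subseq hxK
  refine ⟨x₀, hx₀, fun i => (hF i).mem_of_tendsto (b := atTop) ?_
    (Eventually.of_forall fun m => hyF (φ m) i)⟩
  have hmesh : Tendsto (fun m => 1 / ((φ m : ℝ) + 1)) atTop (𝓝 0) :=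
    tendsto_one_div_add_atTop_nhds_zero_nat.comp hφ.tendsto_atTop
  have hnear : Tendsto (fun m => dist (y (φ m) i) (x (φ m))) atTop (𝓝 0) :=
    squeeze_zero (fun _ => dist_nonneg) (fun m => hy (φ m) i) hmesh
  refine tendsto_iff_dist_tendsto_zero.2 (squeeze_zero (fun _ => dist_nonneg)
    (fun m => dist_triangle _ (x (φ m)) _) ?_)
  simpa using hnear.add (tendsto_iff_dist_tendsto_zero.1 hlim)

section Approximation

variable {n : ℕ} {ℓ u : Fin n → ℝ} {f : Fin n → (Fin n → ℝ) → ℝ} {N : ℕ}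

variable (ℓ u) in
def boxIcc : Set (Fin n → ℝ) := {x | ∀ j, x j ∈ Icc (ℓ j) (u j)}

variable (ℓ u) in
theorem isCompact_boxIcc : IsCompact (boxIcc ℓ u) := by
  convert isCompact_Icc (a := ℓ) (b := u)
  ext x
  simp [boxIcc, Pi.le_def, forall_and]

variable (ℓ u N) in
noncomputable def gridPoint (z : Fin n → ℕ) : Fin n → ℝ :=
  fun i => ℓ i + z i / N * (u i - ℓ i)

theorem gridPoint_mem_boxIcc (hlu : ∀ i, ℓ i ≤ u i) {z : Fin n → ℕ} (hz : z ∈ Kuhn.grid n N) :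
    gridPoint ℓ u N z ∈ boxIcc ℓ u := fun i => by
  have ht₀ : 0 ≤ (z i : ℝ) / N := by positivity
  have ht₁ : (z i : ℝ) / N ≤ 1 := div_le_one_of_le₀ (by exact_mod_cast hz i) (Nat.cast_nonneg N)
  have hul := sub_nonneg.2 (hlu i)
  constructor <;> simp only [gridPoint] <;> nlinarith

theorem gridPoint_apply_of_eq_zero {z : Fin n → ℕ} {i : Fin n} (h : z i = 0) :
    gridPoint ℓ u N z i = ℓ i := by
  simp [gridPoint, h]

theorem gridPoint_apply_of_eq [NeZero N] {z : Fin n → ℕ} {i : Fin n} (h : z i = N) :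
    gridPoint ℓ u N z i = u i := by
  simp [gridPoint, h]

theorem dist_gridPoint_le {z z' : Fin n → ℕ} (h : ∀ i, |(z i : ℝ) - z' i| ≤ 1) :
    dist (gridPoint ℓ u N z) (gridPoint ℓ u N z') ≤ dist ℓ u / N := by
  refine (dist_pi_le_iff (by positivity)).2 fun i => ?_
  have hi : |u i - ℓ i| ≤ dist ℓ u := by
    rw [← Real.dist_eq, dist_comm]
    exact dist_le_pi_dist ℓ u i
  have hsub : gridPoint ℓ u N z i - gridPoint ℓ u N z' i = (z i - z' i : ℝ) / N * (u i - ℓ i) := by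
    simp only [gridPoint]
    ring
  rw [Real.dist_eq, hsub, abs_mul, abs_div, Nat.abs_cast, div_mul_eq_mul_div]
  gcongr
  calc |(z i : ℝ) - z' i| * |u i - ℓ i| ≤ 1 * dist ℓ u := by gcongr; exact h i
    _ = dist ℓ u := one_mul _

variable (ℓ u f N) in
open scoped Classical in
noncomputable def signLabelling (z : Fin n → ℕ) : Fin (n + 1) :=
  if h : ∃ i, 0 < z i ∧ f i (gridPoint ℓ u N z) ≤ 0 then h.choose.castSucc else Fin.last n

theorem nonpos_of_signLabelling_eq_castSucc {z : Fin n → ℕ} {i : Fin n}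
    (h : signLabelling ℓ u f N z = i.castSucc) : f i (gridPoint ℓ u N z) ≤ 0 := by
  unfold signLabelling at h
  split_ifs at h with hex
  · exact Fin.castSucc_injective n h ▸ hex.choose_spec.2
  · exact absurd h (Fin.castSucc_lt_last i).ne'

theorem nonneg_of_signLabelling_eq_last (hlu : ∀ i, ℓ i ≤ u i)
    (hlow : ∀ i, ∀ x ∈ boxIcc ℓ u, 0 ≤ f i (Function.update x i (ℓ i)))
    {z : Fin n → ℕ} (hz : z ∈ Kuhn.grid n N) (h : signLabelling ℓ u f N z = Fin.last n)
    (i : Fin n) : 0 ≤ f i (gridPoint ℓ u N z) := by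
  unfold signLabelling at h
  split_ifs at h with hex
  · exact absurd h (Fin.castSucc_lt_last _).ne
  rcases Nat.eq_zero_or_pos (z i) with hzi | hzi
  · have := hlow i _ (gridPoint_mem_boxIcc hlu hz)
    rwa [Function.update_eq_self_iff.2 (gridPoint_apply_of_eq_zero hzi).symm] at this
  · push Not at hex
    exact (hex i hzi).le

theorem isProperLabelling_signLabelling [NeZero N] (hlu : ∀ i, ℓ i ≤ u i)
    (hupp : ∀ i, ∀ x ∈ boxIcc ℓ u, f i (Function.update x i (u i)) ≤ 0) :
    Kuhn.IsProperLabelling N (signLabelling ℓ u f N) where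
  ne_castSucc z _ i hzi h := by
    unfold signLabelling at h
    split_ifs at h with hex
    · exact (Fin.castSucc_injective n h ▸ hex.choose_spec.1).ne' hzi
    · exact (Fin.castSucc_lt_last i).ne' h
  ne_last z hz i hzi h := by
    have hf : f i (gridPoint ℓ u N z) ≤ 0 := by
      have := hupp i _ (gridPoint_mem_boxIcc hlu hz)
      rwa [Function.update_eq_self_iff.2 (gridPoint_apply_of_eq hzi).symm] at this
    unfold signLabelling at h
    rw [dif_pos ⟨i, hzi ▸ Nat.pos_of_neZero N, hf⟩] at h
    exact (Fin.castSucc_lt_last _).ne h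

theorem exists_near_nonpos_and_near_nonneg (hlu : ∀ i, ℓ i ≤ u i)
    (hlow : ∀ i, ∀ x ∈ boxIcc ℓ u, 0 ≤ f i (Function.update x i (ℓ i)))
    (hupp : ∀ i, ∀ x ∈ boxIcc ℓ u, f i (Function.update x i (u i)) ≤ 0) {ε : ℝ} (hε : 0 < ε) :
    ∃ x ∈ boxIcc ℓ u, ∀ i, (∃ a ∈ boxIcc ℓ u, f i a ≤ 0 ∧ dist a x ≤ ε) ∧
      (∃ c ∈ boxIcc ℓ u, 0 ≤ f i c ∧ dist c x ≤ ε) := by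
  obtain ⟨N, hN⟩ := exists_nat_gt (dist ℓ u / ε)
  have hN₀ : 0 < (N : ℝ) := lt_of_le_of_lt (by positivity) hN
  have : NeZero N := ⟨by exact_mod_cast hN₀.ne'⟩
  obtain ⟨⟨b, π⟩, hfull⟩ :=
    Kuhn.exists_isFullyLabelled (isProperLabelling_signLabelling (N := N) hlu hupp)
  have hnear (k : ℕ) : dist (gridPoint ℓ u N (Kuhn.vertex b π k))
      (gridPoint ℓ u N (Kuhn.vertex b π 0)) ≤ ε := by
    refine (dist_gridPoint_le (Kuhn.abs_vertex_sub_vertex_zero_le b π k)).trans ?_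
    rw [div_le_iff₀ hN₀]
    rw [div_lt_iff₀ hε] at hN
    linarith
  have hmem (k : ℕ) := gridPoint_mem_boxIcc hlu (Kuhn.vertex_mem_grid b π k)
  refine ⟨_, hmem 0, fun i => ⟨?_, ?_⟩⟩
  · obtain ⟨k, hk⟩ := hfull i.castSucc
    exact ⟨_, hmem k, nonpos_of_signLabelling_eq_castSucc hk, hnear k⟩
  · obtain ⟨k, hk⟩ := hfull (Fin.last n)
    exact ⟨_, hmem k, nonneg_of_signLabelling_eq_last hlu hlow (Kuhn.vertex_mem_grid b π k) hk i,
      hnear k⟩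

end Approximation

/-- box boundary-condition zero theorem, an equivalent form of Brouwer's
fixed point theorem: if each `f i` is continuous on the box `D = ∏ [ℓ i, u i]` and is
nonnegative on the lower `i`-face and nonpositive on the upper `i`-face, then the `f i`
have a common zero in the box. -/
theorem box_boundary_zero_existence
    (n : ℕ) (ℓ u : Fin n → ℝ) (hlu : ∀ i, ℓ i ≤ u i)
    (f : Fin n → (Fin n → ℝ) → ℝ)
    (hf : ∀ i, ContinuousOn (f i) {x : Fin n → ℝ | ∀ j, x j ∈ Set.Icc (ℓ j) (u j)})
    (hlow : ∀ i, ∀ x : Fin n → ℝ, (∀ j, x j ∈ Set.Icc (ℓ j) (u j)) →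
      0 ≤ f i (Function.update x i (ℓ i)))
    (hupp : ∀ i, ∀ x : Fin n → ℝ, (∀ j, x j ∈ Set.Icc (ℓ j) (u j)) →
      f i (Function.update x i (u i)) ≤ 0) :
    ∃ x : Fin n → ℝ, (∀ j, x j ∈ Set.Icc (ℓ j) (u j)) ∧ ∀ i, f i x = 0 := by
  have hK := isCompact_boxIcc ℓ u
  let F : Fin n ⊕ Fin n → Set (Fin n → ℝ) :=
    Sum.elim (fun i => boxIcc ℓ u ∩ f i ⁻¹' Iic 0) (fun i => boxIcc ℓ u ∩ f i ⁻¹' Ici 0)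
  have hF : ∀ s, IsClosed (F s) := Sum.rec
    (fun i => (hf i).preimage_isClosed_of_isClosed hK.isClosed isClosed_Iic)
    (fun i => (hf i).preimage_isClosed_of_isClosed hK.isClosed isClosed_Ici)
  obtain ⟨x, hx, hxF⟩ := hK.exists_forall_mem_of_forall_exists_near hF fun ε hε => by
    obtain ⟨x, hx, hnear⟩ := exists_near_nonpos_and_near_nonneg hlu hlow hupp hε
    refine ⟨x, hx, Sum.rec (fun i => ?_) (fun i => ?_)⟩
    · obtain ⟨a, ha, hfa, hdist⟩ := (hnear i).1
      exact ⟨a, ⟨ha, hfa⟩, hdist⟩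
    · obtain ⟨c, hc, hfc, hdist⟩ := (hnear i).2
      exact ⟨c, ⟨hc, hfc⟩, hdist⟩
  exact ⟨x, hx, fun i => le_antisymm (hxF (.inl i)).2 (hxF (.inr i)).2⟩
end

section
/- Define f_i : [0,1]^n → ℝ by f_i(x) = φ_i(x) − x_i = −δ·x_i + (1 − (1−δ)·x_i)·p01d_i(x). For every i ∈ {1,…,n} and every x_{−i} ∈ [0,1]^{n−1}, the function x_i ↦ f_i(x_{−i}, x_i) on [0,1] satisfies f_i(x_{−i}, 0) ≥ 0 and f_i(x_{−i}, 1) < 0, and has a unique zero c_i*(x_{−i}) lying in [0,1). -/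
open Finset Filter Topology Matrix

noncomputable section

/-- Awareness information received by node `i`: a weighted combination of the fraction of
infected social-network neighbors and the global fraction of infected nodes. -/
def infoAwareness (n : ℕ) (GI : SimpleGraph (Fin n)) [DecidableRel GI.Adj]
    (α : ℝ) (x : Fin n → ℝ) (i : Fin n) : ℝ :=
  (α / ((GI.neighborFinset i).card : ℝ)) * ∑ j ∈ GI.neighborFinset i, x j
    + ((1 - α) / (n : ℝ)) * ∑ j, x j

/-- Social distancing action of node `i`. -/
def distAction (n : ℕ) (GI : SimpleGraph (Fin n)) [DecidableRel GI.Adj]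
    (α : ℝ) (x : Fin n → ℝ) (i : Fin n) : ℝ :=
  1 - infoAwareness n GI α x i

/-- Benchmark susceptible-to-infected probability `p01_i(x)`. -/
def p01Bench (n : ℕ) (GC : SimpleGraph (Fin n)) [DecidableRel GC.Adj]
    (β : ℝ) (x : Fin n → ℝ) (i : Fin n) : ℝ :=
  1 - ∏ j ∈ GC.neighborFinset i, (1 - β * x j)

/-- Distancing susceptible-to-infected probability `p01d_i(x)`. -/
def p01Dist (n : ℕ) (GC GI : SimpleGraph (Fin n)) [DecidableRel GC.Adj] [DecidableRel GI.Adj]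
    (α β : ℝ) (x : Fin n → ℝ) (i : Fin n) : ℝ :=
  1 - ∏ j ∈ GC.neighborFinset i, (1 - β * distAction n GI α x i * x j)

/-- Distancing mean-field map `φ`. -/
def phiMap (n : ℕ) (GC GI : SimpleGraph (Fin n)) [DecidableRel GC.Adj] [DecidableRel GI.Adj]
    (α β δ : ℝ) (x : Fin n → ℝ) (i : Fin n) : ℝ :=
  (1 - δ) * x i + (1 - (1 - δ) * x i) * p01Dist n GC GI α β x i

/-- Benchmark mean-field map `ψ`. -/
def psiMap (n : ℕ) (GC : SimpleGraph (Fin n)) [DecidableRel GC.Adj]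
    (β δ : ℝ) (x : Fin n → ℝ) (i : Fin n) : ℝ :=
  (1 - δ) * x i + (1 - (1 - δ) * x i) * p01Bench n GC β x i

end

noncomputable section

/-- The map `f_i(x) = φ_i(x) − x_i = −δ·x_i + (1 − (1−δ)·x_i)·p01d_i(x)`. -/
def fDist (n : ℕ) (GC GI : SimpleGraph (Fin n)) [DecidableRel GC.Adj] [DecidableRel GI.Adj]
    (α β δ : ℝ) (x : Fin n → ℝ) (i : Fin n) : ℝ :=
  -δ * x i + (1 - (1 - δ) * x i) * p01Dist n GC GI α β x i

end


/-- Auxiliary: the awareness information lies in `[0,1]` whenever all states do. -/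
lemma infoAwareness_mem_Icc_aux (n : ℕ) (hn : 0 < n) (GI : SimpleGraph (Fin n))
    [DecidableRel GI.Adj] (α : ℝ) (hα0 : 0 ≤ α) (hα1 : α ≤ 1) (i : Fin n)
    (hne : (GI.neighborFinset i).Nonempty) (y : Fin n → ℝ)
    (hy : ∀ j, y j ∈ Set.Icc (0:ℝ) 1) :
    infoAwareness n GI α y i ∈ Set.Icc (0:ℝ) 1 := by
  have hd : (0:ℝ) < ((GI.neighborFinset i).card : ℝ) := by
    exact_mod_cast Finset.card_pos.mpr hne
  have hnR : (0:ℝ) < (n:ℝ) := by exact_mod_cast hn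
  have hS1 : 0 ≤ ∑ j ∈ GI.neighborFinset i, y j :=
    Finset.sum_nonneg fun j _ => (hy j).1
  have hS1' : ∑ j ∈ GI.neighborFinset i, y j ≤ ((GI.neighborFinset i).card : ℝ) := by
    calc ∑ j ∈ GI.neighborFinset i, y j ≤ ∑ _j ∈ GI.neighborFinset i, (1:ℝ) :=
          Finset.sum_le_sum fun j _ => (hy j).2
      _ = ((GI.neighborFinset i).card : ℝ) := by simp
  have hS2 : 0 ≤ ∑ j, y j := Finset.sum_nonneg fun j _ => (hy j).1
  have hS2' : ∑ j, y j ≤ (n:ℝ) := by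
    calc ∑ j, y j ≤ ∑ _j : Fin n, (1:ℝ) := Finset.sum_le_sum fun j _ => (hy j).2
      _ = (n:ℝ) := by simp
  unfold infoAwareness
  constructor
  · have h1 : 0 ≤ α / ((GI.neighborFinset i).card : ℝ) := div_nonneg hα0 hd.le
    have h2 : 0 ≤ (1 - α) / (n:ℝ) := div_nonneg (by linarith) hnR.le
    have := mul_nonneg h1 hS1
    have := mul_nonneg h2 hS2
    linarith
  · have h1 : α / ((GI.neighborFinset i).card : ℝ) * ∑ j ∈ GI.neighborFinset i, y j ≤ α := by
      calc α / ((GI.neighborFinset i).card : ℝ) * ∑ j ∈ GI.neighborFinset i, y j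
        ≤ α / ((GI.neighborFinset i).card : ℝ) * ((GI.neighborFinset i).card : ℝ) :=
          mul_le_mul_of_nonneg_left hS1' (div_nonneg hα0 hd.le)
      _ = α := div_mul_cancel₀ α hd.ne'
    have h2 : (1 - α) / (n:ℝ) * ∑ j, y j ≤ 1 - α := by
      calc (1 - α) / (n:ℝ) * ∑ j, y j ≤ (1 - α) / (n:ℝ) * (n:ℝ) :=
            mul_le_mul_of_nonneg_left hS2' (div_nonneg (by linarith) hnR.le)
        _ = 1 - α := div_mul_cancel₀ _ hnR.ne'
    linarith

/-- for each node `i` and each choice of the other coordinates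
`x_{−i} ∈ [0,1]^{n−1}` (encoded by a vector `x ∈ [0,1]^n` whose `i`-th coordinate is
overwritten), the map `x_i ↦ f_i(x_{−i}, x_i)` satisfies `f_i(x_{−i},0) ≥ 0`,
`f_i(x_{−i},1) < 0`, and has a unique zero `c_i*(x_{−i})` in `[0,1)`. -/
theorem fDist_boundary_signs_and_unique_root
    (n : ℕ) (hn : 0 < n) (GC GI : SimpleGraph (Fin n)) [DecidableRel GC.Adj] [DecidableRel GI.Adj]
    (hGI : ∀ i, (GI.neighborFinset i).Nonempty)
    (α β δ : ℝ) (hα : α ∈ Set.Icc (0:ℝ) 1) (hβ : β ∈ Set.Ioo (0:ℝ) 1)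
    (hδ : δ ∈ Set.Ioo (0:ℝ) 1)
    (i : Fin n) (x : Fin n → ℝ) (hx : ∀ j, x j ∈ Set.Icc (0:ℝ) 1) :
    0 ≤ fDist n GC GI α β δ (Function.update x i 0) i ∧
    fDist n GC GI α β δ (Function.update x i 1) i < 0 ∧
    ∃! c : ℝ, c ∈ Set.Ico (0:ℝ) 1 ∧ fDist n GC GI α β δ (Function.update x i c) i = 0 := by
  obtain ⟨hα0, hα1⟩ := hα
  obtain ⟨hβ0, hβ1⟩ := hβ
  obtain ⟨hδ0, hδ1⟩ := hδ
  have hnR : (0:ℝ) < (n:ℝ) := by exact_mod_cast hn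
  set F : ℝ → ℝ := fun c => fDist n GC GI α β δ (Function.update x i c) i with hFdef
  set A : ℝ → ℝ := fun c => distAction n GI α (Function.update x i c) i with hAdef
  set Q : ℝ → ℝ := fun c => ∏ j ∈ GC.neighborFinset i, (1 - β * A c * x j) with hQdef
  -- coordinates of the updated vector stay in [0,1]
  have hupd : ∀ c ∈ Set.Icc (0:ℝ) 1, ∀ j, Function.update x i c j ∈ Set.Icc (0:ℝ) 1 := by
    intro c hc j
    rcases eq_or_ne j i with rfl | hji
    · simpa using hc
    · simpa [Function.update_of_ne hji] using hx j
  -- the contact product does not involve coordinate i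
  have hQeq : ∀ c, (∏ j ∈ GC.neighborFinset i,
      (1 - β * A c * Function.update x i c j)) = Q c := by
    intro c
    refine Finset.prod_congr rfl fun j hj => ?_
    have hji : j ≠ i := by
      rintro rfl
      exact GC.notMem_neighborFinset_self j hj
    rw [Function.update_of_ne hji]
  have hFeq : ∀ c, F c = -δ * c + (1 - (1 - δ) * c) * (1 - Q c) := by
    intro c
    simp only [hFdef, fDist, p01Dist, Function.update_self]
    rw [hQeq c]
  -- A is in [0,1] on [0,1]
  have hA01 : ∀ c ∈ Set.Icc (0:ℝ) 1, A c ∈ Set.Icc (0:ℝ) 1 := by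
    intro c hc
    have := infoAwareness_mem_Icc_aux n hn GI α hα0 hα1 i (hGI i)
      (Function.update x i c) (hupd c hc)
    constructor
    · simp only [hAdef, distAction]; linarith [this.2]
    · simp only [hAdef, distAction]; linarith [this.1]
  -- explicit affine formula for A
  have hAeq : ∀ c, A c = 1 - ((α / ((GI.neighborFinset i).card : ℝ)) *
      (∑ j ∈ GI.neighborFinset i, x j)
      + ((1 - α) / (n:ℝ)) * (c + ∑ j ∈ Finset.univ \ {i}, x j)) := by
    intro c
    have h1 : ∑ j ∈ GI.neighborFinset i, Function.update x i c j
        = ∑ j ∈ GI.neighborFinset i, x j := by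
      refine Finset.sum_congr rfl fun j hj => ?_
      have hji : j ≠ i := by
        rintro rfl
        exact GI.notMem_neighborFinset_self j hj
      rw [Function.update_of_ne hji]
    have h2 : ∑ j, Function.update x i c j = c + ∑ j ∈ Finset.univ \ {i}, x j :=
      Finset.sum_update_of_mem (Finset.mem_univ i) x c
    simp only [hAdef, distAction, infoAwareness, h1, h2]
  -- A is antitone
  have hAmono : ∀ c₁ c₂ : ℝ, c₁ ≤ c₂ → A c₂ ≤ A c₁ := by
    intro c₁ c₂ h
    rw [hAeq c₁, hAeq c₂]
    have hcoef : 0 ≤ (1 - α) / (n:ℝ) := div_nonneg (by linarith) hnR.le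
    nlinarith
  -- product bounds
  have hQpos : ∀ c ∈ Set.Icc (0:ℝ) 1, 0 < Q c := by
    intro c hc
    refine Finset.prod_pos fun j hj => ?_
    have hji : j ≠ i := by rintro rfl; exact GC.notMem_neighborFinset_self j hj
    have h1 := (hA01 c hc).1; have h2 := (hA01 c hc).2
    have h3 := (hx j).1; have h4 := (hx j).2
    nlinarith [mul_nonneg h1 h3, mul_le_one₀ h2 h3 h4, mul_le_mul_of_nonneg_left (mul_le_one₀ h2 h3 h4) hβ0.le]
  have hQle1 : ∀ c ∈ Set.Icc (0:ℝ) 1, Q c ≤ 1 := by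
    intro c hc
    refine Finset.prod_le_one (fun j hj => ?_) (fun j hj => ?_)
    · have h1 := (hA01 c hc).1; have h2 := (hA01 c hc).2
      have h3 := (hx j).1; have h4 := (hx j).2
      nlinarith [mul_le_mul_of_nonneg_left (mul_le_one₀ h2 h3 h4) hβ0.le]
    · have h1 := (hA01 c hc).1
      have h3 := (hx j).1
      nlinarith [mul_nonneg (mul_nonneg hβ0.le h1) h3]
  -- Q is monotone on [0,1]
  have hQmono : ∀ c₁ ∈ Set.Icc (0:ℝ) 1, ∀ c₂ ∈ Set.Icc (0:ℝ) 1, c₁ ≤ c₂ → Q c₁ ≤ Q c₂ := by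
    intro c₁ hc₁ c₂ hc₂ h
    refine Finset.prod_le_prod (fun j hj => ?_) (fun j hj => ?_)
    · have h1 := (hA01 c₁ hc₁).1; have h2 := (hA01 c₁ hc₁).2
      have h3 := (hx j).1; have h4 := (hx j).2
      nlinarith [mul_le_mul_of_nonneg_left (mul_le_one₀ h2 h3 h4) hβ0.le]
    · have hA12 := hAmono c₁ c₂ h
      have h1 := (hA01 c₂ hc₂).1
      have h3 := (hx j).1
      nlinarith [mul_le_mul_of_nonneg_right (mul_le_mul_of_nonneg_left hA12 hβ0.le) h3]
  -- strict antitonicity of F on [0,1]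
  have hFanti : StrictAntiOn F (Set.Icc (0:ℝ) 1) := by
    intro c₁ hc₁ c₂ hc₂ h
    rw [hFeq c₁, hFeq c₂]
    have hq := hQmono c₁ hc₁ c₂ hc₂ h.le
    have hq1 := hQle1 c₂ hc₂
    have hq0 := (hQpos c₁ hc₁).le
    have hg2 : (0:ℝ) ≤ 1 - (1 - δ) * c₂ := by nlinarith [hc₂.1, hc₂.2]
    have hg12 : 1 - (1 - δ) * c₂ ≤ 1 - (1 - δ) * c₁ := by nlinarith
    have hp12 : 1 - Q c₂ ≤ 1 - Q c₁ := by linarith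
    have hp2 : (0:ℝ) ≤ 1 - Q c₂ := by linarith
    have key : (1 - (1 - δ) * c₂) * (1 - Q c₂) ≤ (1 - (1 - δ) * c₁) * (1 - Q c₁) :=
      mul_le_mul hg12 hp12 hp2 (by linarith [hQpos c₁ hc₁])
    nlinarith
  -- continuity of F
  have hcont : Continuous F := by
    have hrw : F = fun c => -δ * c + (1 - (1 - δ) * c) *
        (1 - ∏ j ∈ GC.neighborFinset i,
          (1 - β * (1 - ((α / ((GI.neighborFinset i).card : ℝ)) *
            (∑ j ∈ GI.neighborFinset i, x j)
            + ((1 - α) / (n:ℝ)) * (c + ∑ j ∈ Finset.univ \ {i}, x j))) * x j)) := by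
      funext c
      rw [hFeq c, hQdef]
      simp only [hAeq c]
    rw [hrw]
    refine Continuous.add (by fun_prop) (Continuous.mul (by fun_prop) ?_)
    refine Continuous.sub continuous_const ?_
    exact continuous_finset_prod _ fun j _ => by fun_prop
  -- boundary signs
  have h0mem : (0:ℝ) ∈ Set.Icc (0:ℝ) 1 := by constructor <;> norm_num
  have h1mem : (1:ℝ) ∈ Set.Icc (0:ℝ) 1 := by constructor <;> norm_num
  have hF0 : 0 ≤ F 0 := by
    rw [hFeq 0]
    have := hQle1 0 h0mem
    nlinarith
  have hF1 : F 1 < 0 := by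
    rw [hFeq 1]
    have := hQpos 1 h1mem
    nlinarith
  refine ⟨hF0, hF1, ?_⟩
  -- existence via IVT
  have hiv : (0:ℝ) ∈ F '' Set.Icc 0 1 := by
    apply intermediate_value_Icc' (by norm_num : (0:ℝ) ≤ 1) hcont.continuousOn
    exact ⟨hF1.le, hF0⟩
  obtain ⟨c, hc, hFc⟩ := hiv
  have hcne : c ≠ 1 := by
    rintro rfl
    rw [hFc] at hF1
    exact lt_irrefl 0 hF1
  refine ⟨c, ⟨⟨hc.1, lt_of_le_of_ne hc.2 hcne⟩, hFc⟩, ?_⟩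
  rintro c' ⟨hc', hFc'⟩
  have hc'I : c' ∈ Set.Icc (0:ℝ) 1 := ⟨hc'.1, hc'.2.le⟩
  exact hFanti.injOn hc'I hc (hFc'.trans hFc.symm)
end

section
/- Define f_i : [0,1]^n → ℝ by f_i(x) = −δ·x_i + (1 − (1−δ)·x_i)·p01d_i(x). For every i ∈ {1,…,n} and every x_{−i} ∈ [0,1]^{n−1}, the function x_i ↦ f_i(x_{−i}, x_i) is strictly decreasing on [0,1]: for all 0 ≤ a < b ≤ 1, f_i(x_{−i}, a) > f_i(x_{−i}, b). -/
open Finset Filter Topology Matrix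

/-- for each node `i` and each choice of the other coordinates
`x_{−i} ∈ [0,1]^{n−1}` (encoded by a vector `x ∈ [0,1]^n` whose `i`-th coordinate is
overwritten), the map `x_i ↦ f_i(x_{−i}, x_i)` is strictly decreasing on `[0,1]`. -/
theorem fDist_strict_antitone
    (n : ℕ) (hn : 0 < n) (GC GI : SimpleGraph (Fin n)) [DecidableRel GC.Adj] [DecidableRel GI.Adj]
    (hGI : ∀ i, (GI.neighborFinset i).Nonempty)
    (α β δ : ℝ) (hα : α ∈ Set.Icc (0:ℝ) 1) (hβ : β ∈ Set.Ioo (0:ℝ) 1)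
    (hδ : δ ∈ Set.Ioo (0:ℝ) 1)
    (i : Fin n) (x : Fin n → ℝ) (hx : ∀ j, x j ∈ Set.Icc (0:ℝ) 1)
    (a b : ℝ) (ha : 0 ≤ a) (hab : a < b) (hb : b ≤ 1) :
    fDist n GC GI α β δ (Function.update x i b) i <
      fDist n GC GI α β δ (Function.update x i a) i := by
  obtain ⟨hα0, hα1⟩ := hα
  obtain ⟨hβ0, hβ1⟩ := hβ
  obtain ⟨hδ0, hδ1⟩ := hδ
  set y := Function.update x i a with hy_def
  set z := Function.update x i b with hz_def
  have hb01 : b ∈ Set.Icc (0:ℝ) 1 := ⟨le_of_lt (lt_of_le_of_lt ha hab), hb⟩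
  have ha01 : a ∈ Set.Icc (0:ℝ) 1 := ⟨ha, le_trans hab.le hb⟩
  have hy : ∀ j, y j ∈ Set.Icc (0:ℝ) 1 := by
    intro j; by_cases h : j = i
    · subst h; simpa [hy_def] using ha01
    · simpa [hy_def, Function.update_of_ne h] using hx j
  have hz : ∀ j, z j ∈ Set.Icc (0:ℝ) 1 := by
    intro j; by_cases h : j = i
    · subst h; simpa [hz_def] using hb01
    · simpa [hz_def, Function.update_of_ne h] using hx j
  have hcard : (0:ℝ) < ((GI.neighborFinset i).card : ℝ) := by
    exact_mod_cast Finset.card_pos.mpr (hGI i)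
  have hnpos : (0:ℝ) < (n:ℝ) := by exact_mod_cast hn
  -- infoAwareness in [0,1]
  have hmu : ∀ w : Fin n → ℝ, (∀ j, w j ∈ Set.Icc (0:ℝ) 1) →
      infoAwareness n GI α w i ∈ Set.Icc (0:ℝ) 1 := by
    intro w hw
    have h1 : ∑ j ∈ GI.neighborFinset i, w j ≤ ((GI.neighborFinset i).card : ℝ) := by
      calc ∑ j ∈ GI.neighborFinset i, w j ≤ ∑ _j ∈ GI.neighborFinset i, (1:ℝ) :=
            Finset.sum_le_sum fun j _ => (hw j).2
        _ = _ := by simp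
    have h1' : (0:ℝ) ≤ ∑ j ∈ GI.neighborFinset i, w j :=
      Finset.sum_nonneg fun j _ => (hw j).1
    have h2 : ∑ j, w j ≤ (n:ℝ) := by
      calc ∑ j, w j ≤ ∑ _j : Fin n, (1:ℝ) := Finset.sum_le_sum fun j _ => (hw j).2
        _ = n := by simp
    have h2' : (0:ℝ) ≤ ∑ j, w j := Finset.sum_nonneg fun j _ => (hw j).1
    have e1 : (α / ((GI.neighborFinset i).card : ℝ)) * ∑ j ∈ GI.neighborFinset i, w j ≤ α := by
      have := mul_le_mul_of_nonneg_left h1 (div_nonneg hα0 hcard.le)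
      calc (α / ((GI.neighborFinset i).card : ℝ)) * ∑ j ∈ GI.neighborFinset i, w j
          ≤ (α / ((GI.neighborFinset i).card : ℝ)) * ((GI.neighborFinset i).card : ℝ) := this
        _ = α := div_mul_cancel₀ α hcard.ne'
    have hA : (0:ℝ) ≤ 1 - α := by linarith
    have e2 : ((1 - α) / (n:ℝ)) * ∑ j, w j ≤ 1 - α := by
      have := mul_le_mul_of_nonneg_left h2 (div_nonneg hA hnpos.le)
      calc ((1 - α) / (n:ℝ)) * ∑ j, w j ≤ ((1 - α) / (n:ℝ)) * (n:ℝ) := this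
        _ = 1 - α := div_mul_cancel₀ _ hnpos.ne'
    constructor
    · apply add_nonneg
      · exact mul_nonneg (div_nonneg hα0 hcard.le) h1'
      · exact mul_nonneg (div_nonneg hA hnpos.le) h2'
    · unfold infoAwareness; linarith
  have hdy := hmu y hy
  have hdz := hmu z hz
  have hay0 : 0 ≤ distAction n GI α y i := by unfold distAction; linarith [hdy.2]
  have hay1 : distAction n GI α y i ≤ 1 := by unfold distAction; linarith [hdy.1]
  have haz0 : 0 ≤ distAction n GI α z i := by unfold distAction; linarith [hdz.2]
  have haz1 : distAction n GI α z i ≤ 1 := by unfold distAction; linarith [hdz.1]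
  -- d z ≤ d y
  have hsum_social : ∑ j ∈ GI.neighborFinset i, z j = ∑ j ∈ GI.neighborFinset i, y j := by
    refine Finset.sum_congr rfl fun j hj => ?_
    have hji : j ≠ i := by
      intro h; subst h; exact (SimpleGraph.notMem_neighborFinset_self GI j) hj
    simp [hy_def, hz_def, Function.update_of_ne hji]
  have hsum_all : ∑ j, z j = (∑ j, y j) + (b - a) := by
    have hz' : ∑ j, z j = b + ∑ j ∈ Finset.univ \ {i}, x j :=
      Finset.sum_update_of_mem (Finset.mem_univ i) x b
    have hy' : ∑ j, y j = a + ∑ j ∈ Finset.univ \ {i}, x j :=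
      Finset.sum_update_of_mem (Finset.mem_univ i) x a
    rw [hz', hy']; ring
  have hd : distAction n GI α z i ≤ distAction n GI α y i := by
    unfold distAction infoAwareness
    rw [hsum_social, hsum_all]
    have hB : (0:ℝ) ≤ (1 - α) / (n:ℝ) := div_nonneg (by linarith) hnpos.le
    nlinarith [mul_nonneg hB (sub_nonneg.mpr hab.le)]
  -- factor facts
  have hfac : ∀ (w : Fin n → ℝ) (hw : ∀ j, w j ∈ Set.Icc (0:ℝ) 1) (d : ℝ),
      0 ≤ d → d ≤ 1 → ∀ j ∈ GC.neighborFinset i,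
      0 ≤ 1 - β * d * w j ∧ 1 - β * d * w j ≤ 1 := by
    intro w hw d hd0 hd1 j _
    have h0 := (hw j).1
    have h1 := (hw j).2
    have hbd : β * d ≤ 1 := mul_le_one₀ hβ1.le hd0 hd1
    have hle1 : β * d * w j ≤ 1 := mul_le_one₀ hbd h0 h1
    have hge0 : 0 ≤ β * d * w j := mul_nonneg (mul_nonneg hβ0.le hd0) h0
    exact ⟨by linarith, by linarith⟩
  have hprod_le_one : ∏ j ∈ GC.neighborFinset i, (1 - β * distAction n GI α z i * z j) ≤ 1 :=
    Finset.prod_le_one (fun j hj => (hfac z hz _ haz0 haz1 j hj).1)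
      (fun j hj => (hfac z hz _ haz0 haz1 j hj).2)
  have hprod : ∏ j ∈ GC.neighborFinset i, (1 - β * distAction n GI α y i * y j)
      ≤ ∏ j ∈ GC.neighborFinset i, (1 - β * distAction n GI α z i * z j) := by
    apply Finset.prod_le_prod
    · intro j hj; exact (hfac y hy _ hay0 hay1 j hj).1
    · intro j hj
      have hji : j ≠ i := by
        intro h; subst h; exact (SimpleGraph.notMem_neighborFinset_self GC j) hj
      have hyz : y j = x j := by simp [hy_def, Function.update_of_ne hji]
      have hzz : z j = x j := by simp [hz_def, Function.update_of_ne hji]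
      rw [hyz, hzz]
      have hx0 := (hx j).1
      have := mul_le_mul_of_nonneg_right (mul_le_mul_of_nonneg_left hd hβ0.le) hx0
      linarith
  -- conclude
  have hpy : p01Dist n GC GI α β y i ≥ p01Dist n GC GI α β z i := by
    unfold p01Dist; linarith
  have hpz0 : 0 ≤ p01Dist n GC GI α β z i := by
    unfold p01Dist; linarith
  have hpy0 : 0 ≤ p01Dist n GC GI α β y i := le_trans hpz0 hpy
  unfold fDist
  have hyi : y i = a := Function.update_self i a x
  have hzi : z i = b := Function.update_self i b x
  rw [hyi, hzi]
  have hca : (0:ℝ) ≤ 1 - (1 - δ) * a := by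
    have : (1 - δ) * a ≤ 1 := mul_le_one₀ (by linarith) ha ha01.2
    linarith
  have hcb : (0:ℝ) ≤ 1 - (1 - δ) * b := by
    have : (1 - δ) * b ≤ 1 := mul_le_one₀ (by linarith) hb01.1 hb
    linarith
  have hcab : 1 - (1 - δ) * b ≤ 1 - (1 - δ) * a := by
    have := mul_le_mul_of_nonneg_left hab.le (by linarith : (0:ℝ) ≤ 1 - δ)
    linarith
  have : (1 - (1 - δ) * b) * p01Dist n GC GI α β z i
      ≤ (1 - (1 - δ) * a) * p01Dist n GC GI α β y i := by
    calc (1 - (1 - δ) * b) * p01Dist n GC GI α β z i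
        ≤ (1 - (1 - δ) * b) * p01Dist n GC GI α β y i :=
          mul_le_mul_of_nonneg_left hpy hcb
      _ ≤ (1 - (1 - δ) * a) * p01Dist n GC GI α β y i :=
          mul_le_mul_of_nonneg_right hcab hpy0
  have hd' : δ * a < δ * b := mul_lt_mul_of_pos_left hab hδ0
  linarith
end

section
/- Let c_i*(x_{−i}) ∈ [0,1) denote the unique zero in [0,1) of x_i ↦ f_i(x_{−i}, x_i), where f_i(x) = −δ·x_i + (1 − (1−δ)·x_i)·p01d_i(x). Then the map x_{−i} ↦ c_i*(x_{−i}) is continuous on [0,1]^{n−1}, and c_i*(0_{n−1}) = 0; consequently there exists a sequence x_{−i}^k → 0_{n−1} such that c_i*(x_{−i}^k) decreases monotonically to 0. -/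
open Finset Filter Topology Matrix

open Filter Topology in
/-- the unique-root map `x_{−i} ↦ c_i*(x_{−i})` (here `cstar`, characterized
as the unique zero in `[0,1)` of `x_i ↦ f_i(x_{−i}, x_i)`) is continuous on the box,
satisfies `c_i*(0) = 0`, and there is a sequence `x_{−i}^k → 0` in the box along which
`c_i*` decreases monotonically to `0`. -/
theorem cstar_continuous_and_decreasing_sequence
    (n : ℕ) (hn : 0 < n) (GC GI : SimpleGraph (Fin n)) [DecidableRel GC.Adj] [DecidableRel GI.Adj]
    (hGI : ∀ i, (GI.neighborFinset i).Nonempty)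
    (α β δ : ℝ) (hα : α ∈ Set.Icc (0:ℝ) 1) (hβ : β ∈ Set.Ioo (0:ℝ) 1)
    (hδ : δ ∈ Set.Ioo (0:ℝ) 1) (i : Fin n)
    (cstar : (Fin n → ℝ) → ℝ)
    (hc : ∀ x : Fin n → ℝ, (∀ j, x j ∈ Set.Icc (0:ℝ) 1) →
      cstar x ∈ Set.Ico (0:ℝ) 1 ∧
      fDist n GC GI α β δ (Function.update x i (cstar x)) i = 0 ∧
      (∀ c ∈ Set.Ico (0:ℝ) 1,
        fDist n GC GI α β δ (Function.update x i c) i = 0 → c = cstar x)) :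
    ContinuousOn cstar {x : Fin n → ℝ | ∀ j, x j ∈ Set.Icc (0:ℝ) 1} ∧
    cstar 0 = 0 ∧
    ∃ xs : ℕ → Fin n → ℝ, (∀ k j, xs k j ∈ Set.Icc (0:ℝ) 1) ∧
      Tendsto xs atTop (𝓝 0) ∧
      Antitone (fun k => cstar (xs k)) ∧
      Tendsto (fun k => cstar (xs k)) atTop (𝓝 0) := by
  obtain ⟨hα0, hα1⟩ := hα
  obtain ⟨hβ0, hβ1⟩ := hβ
  obtain ⟨hδ0, hδ1⟩ := hδ
  set S := {x : Fin n → ℝ | ∀ j, x j ∈ Set.Icc (0:ℝ) 1} with hS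
  -- continuity of x ↦ fDist ... x i
  have contF : Continuous fun x : Fin n → ℝ => fDist n GC GI α β δ x i := by
    unfold fDist p01Dist distAction infoAwareness
    fun_prop
  -- awareness / action bounds
  have hact : ∀ x : Fin n → ℝ, (∀ j, x j ∈ Set.Icc (0:ℝ) 1) →
      distAction n GI α x i ∈ Set.Icc (0:ℝ) 1 := by
    intro x hx
    have hcard : (0:ℝ) < ((GI.neighborFinset i).card : ℝ) := by
      exact_mod_cast (hGI i).card_pos
    have h1 : (0:ℝ) ≤ ∑ j ∈ GI.neighborFinset i, x j :=
      Finset.sum_nonneg fun j _ => (hx j).1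
    have h2 : (0:ℝ) ≤ ∑ j, x j := Finset.sum_nonneg fun j _ => (hx j).1
    have h3 : ∑ j ∈ GI.neighborFinset i, x j ≤ ((GI.neighborFinset i).card : ℝ) := by
      calc ∑ j ∈ GI.neighborFinset i, x j ≤ ∑ j ∈ GI.neighborFinset i, 1 :=
            Finset.sum_le_sum fun j _ => (hx j).2
        _ = ((GI.neighborFinset i).card : ℝ) := by simp
    have h4 : ∑ j, x j ≤ (n : ℝ) := by
      calc ∑ j, x j ≤ ∑ _j : Fin n, (1:ℝ) := Finset.sum_le_sum fun j _ => (hx j).2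
        _ = (n : ℝ) := by simp
    have hn' : (0:ℝ) < (n : ℝ) := by exact_mod_cast hn
    have ht1 : (0:ℝ) ≤ α / ((GI.neighborFinset i).card : ℝ) * ∑ j ∈ GI.neighborFinset i, x j :=
      mul_nonneg (div_nonneg hα0 hcard.le) h1
    have ht2 : (0:ℝ) ≤ (1 - α) / (n : ℝ) * ∑ j, x j :=
      mul_nonneg (div_nonneg (by linarith) hn'.le) h2
    have ht1' : α / ((GI.neighborFinset i).card : ℝ) * ∑ j ∈ GI.neighborFinset i, x j ≤ α := by
      have := mul_le_mul_of_nonneg_left h3 (div_nonneg hα0 hcard.le)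
      calc α / ((GI.neighborFinset i).card : ℝ) * ∑ j ∈ GI.neighborFinset i, x j
          ≤ α / ((GI.neighborFinset i).card : ℝ) * ((GI.neighborFinset i).card : ℝ) := this
        _ = α := div_mul_cancel₀ α hcard.ne'
    have ht2' : (1 - α) / (n : ℝ) * ∑ j, x j ≤ 1 - α := by
      have := mul_le_mul_of_nonneg_left h4 (div_nonneg (by linarith : (0:ℝ) ≤ 1 - α) hn'.le)
      calc (1 - α) / (n : ℝ) * ∑ j, x j ≤ (1 - α) / (n : ℝ) * (n : ℝ) := this
        _ = 1 - α := div_mul_cancel₀ _ hn'.ne'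
    unfold distAction infoAwareness
    constructor <;> [linarith; linarith]
  -- f at x_i = 1 is negative
  have hfneg : ∀ x : Fin n → ℝ, (∀ j, x j ∈ Set.Icc (0:ℝ) 1) → x i = 1 →
      fDist n GC GI α β δ x i < 0 := by
    intro x hx hxi
    obtain ⟨ha0, ha1⟩ := hact x hx
    have hP : 0 < ∏ j ∈ GC.neighborFinset i, (1 - β * distAction n GI α x i * x j) := by
      apply Finset.prod_pos
      intro j _
      have hxj := hx j
      have : β * distAction n GI α x i * x j ≤ β * 1 * 1 := by
        apply mul_le_mul (mul_le_mul le_rfl ha1 ha0 hβ0.le) hxj.2 hxj.1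
        positivity
      simp only [mul_one] at this
      linarith
    unfold fDist p01Dist
    rw [hxi]
    nlinarith [mul_pos hδ0 hP]
  -- key sequential continuity
  have key : ∀ x₀ ∈ S, ∀ u : ℕ → Fin n → ℝ, (∀ k, u k ∈ S) →
      Tendsto u atTop (𝓝 x₀) → Tendsto (fun k => cstar (u k)) atTop (𝓝 (cstar x₀)) := by
    intro x₀ hx₀ u hu hulim
    apply tendsto_of_subseq_tendsto
    intro ns hns
    have hyIcc : ∀ k, cstar (u (ns k)) ∈ Set.Icc (0:ℝ) 1 := fun k =>
      ⟨((hc _ (hu _)).1).1, le_of_lt ((hc _ (hu _)).1).2⟩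
    obtain ⟨L, hL, φ, hφ, hconv⟩ :=
      (isCompact_Icc (a := (0:ℝ)) (b := 1)).tendsto_subseq hyIcc
    have hnsφ : Tendsto (fun k => ns (φ k)) atTop atTop := hns.comp hφ.tendsto_atTop
    have hulim2 : Tendsto (fun k => u (ns (φ k))) atTop (𝓝 x₀) := hulim.comp hnsφ
    have hupd : Tendsto
        (fun k => Function.update (u (ns (φ k))) i (cstar (u (ns (φ k)))))
        atTop (𝓝 (Function.update x₀ i L)) :=
      hulim2.update i hconv
    have h0 : fDist n GC GI α β δ (Function.update x₀ i L) i = 0 := by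
      have hto : Tendsto
          (fun k => fDist n GC GI α β δ
            (Function.update (u (ns (φ k))) i (cstar (u (ns (φ k))))) i)
          atTop (𝓝 (fDist n GC GI α β δ (Function.update x₀ i L) i)) :=
        (contF.tendsto _).comp hupd
      have hz : (fun k => fDist n GC GI α β δ
          (Function.update (u (ns (φ k))) i (cstar (u (ns (φ k))))) i) = fun _ => (0:ℝ) := by
        funext k; exact (hc _ (hu _)).2.1
      rw [hz] at hto
      exact (tendsto_nhds_unique tendsto_const_nhds hto).symm
    have hxupd : ∀ j, Function.update x₀ i (1:ℝ) j ∈ Set.Icc (0:ℝ) 1 := by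
      intro j
      rcases eq_or_ne j i with rfl | hj
      · simp
      · simp only [Function.update_of_ne hj]; exact hx₀ j
    have hL1 : L ≠ 1 := by
      intro h
      rw [h] at h0
      have := hfneg (Function.update x₀ i 1) hxupd (Function.update_self i 1 x₀)
      linarith
    have hLc : L = cstar x₀ :=
      (hc x₀ hx₀).2.2 L ⟨hL.1, lt_of_le_of_ne hL.2 hL1⟩ h0
    exact ⟨φ, hLc ▸ hconv⟩
  have hcont : ContinuousOn cstar S := by
    intro x₀ hx₀
    unfold ContinuousWithinAt
    rw [tendsto_iff_seq_tendsto]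
    intro u hu
    have huS : ∀ᶠ k in atTop, u k ∈ S := hu self_mem_nhdsWithin
    have hulim : Tendsto u atTop (𝓝 x₀) := hu.mono_right nhdsWithin_le_nhds
    classical
    set u' : ℕ → Fin n → ℝ := fun k => if u k ∈ S then u k else x₀ with hu'
    have hu'S : ∀ k, u' k ∈ S := by
      intro k; by_cases h : u k ∈ S <;> simp [hu', h, hx₀]
    have heq : ∀ᶠ k in atTop, u k = u' k := huS.mono fun k hk => by simp [hu', hk]
    have hu'lim : Tendsto u' atTop (𝓝 x₀) := hulim.congr' heq
    have := key x₀ hx₀ u' hu'S hu'lim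
    exact this.congr' (heq.mono fun k hk => by rw [Function.comp_apply, hk])
  have h00 : ∀ j, (0 : Fin n → ℝ) j ∈ Set.Icc (0:ℝ) 1 := fun j => ⟨le_rfl, zero_le_one⟩
  have hupd0 : Function.update (0 : Fin n → ℝ) i 0 = 0 := by
    funext j; rcases eq_or_ne j i with rfl | hj <;> simp [Function.update_of_ne, *]
  have hf0 : fDist n GC GI α β δ 0 i = 0 := by
    unfold fDist p01Dist
    simp
  have hc0 : cstar 0 = 0 := by
    have := (hc 0 h00).2.2 0 ⟨le_rfl, zero_lt_one⟩ (by rw [hupd0]; exact hf0)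
    exact this.symm
  refine ⟨hcont, hc0, fun _ => 0, fun k => h00, tendsto_const_nhds, ?_, ?_⟩
  · intro a b _; simp
  · exact hc0 ▸ (tendsto_const_nhds : Tendsto (fun _ : ℕ => cstar 0) atTop (𝓝 (cstar 0)))
end

section
/- Assume G_C is connected and α ∈ [0,1). Suppose q* ∈ [0,1]^n with q* ≻ 0_n is a fixed point of ψ such that every q in ψ⁺ = {x ∈ [0,1]^n : ψ(x) ⪰ x} with q ≠ q* satisfies q ≺ q*. Then every fixed point p* of φ with p* ≠ 0_n satisfies p* ≺ q* (strict componentwise inequality). -/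
open Finset Filter Topology Matrix

section Aux

lemma infoAwareness_mem (n : ℕ) (GI : SimpleGraph (Fin n)) [DecidableRel GI.Adj]
    (hGI : ∀ i, (GI.neighborFinset i).Nonempty)
    (α : ℝ) (hα0 : 0 ≤ α) (hα1 : α ≤ 1)
    (x : Fin n → ℝ) (hx : ∀ j, x j ∈ Set.Icc (0:ℝ) 1) (i : Fin n) :
    infoAwareness n GI α x i ∈ Set.Icc (0:ℝ) 1 := by
  have hn : (0:ℝ) < n := by exact_mod_cast i.pos
  have hc : (0:ℝ) < ((GI.neighborFinset i).card : ℝ) := by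
    exact_mod_cast Finset.card_pos.mpr (hGI i)
  constructor
  · apply add_nonneg
    · exact mul_nonneg (div_nonneg hα0 hc.le) (Finset.sum_nonneg fun j _ => (hx j).1)
    · exact mul_nonneg (div_nonneg (by linarith) hn.le)
        (Finset.sum_nonneg fun j _ => (hx j).1)
  · have h1 : ∑ j ∈ GI.neighborFinset i, x j ≤ ((GI.neighborFinset i).card : ℝ) := by
      calc ∑ j ∈ GI.neighborFinset i, x j ≤ ∑ j ∈ GI.neighborFinset i, 1 :=
            Finset.sum_le_sum fun j _ => (hx j).2
        _ = ((GI.neighborFinset i).card : ℝ) := by simp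
    have h2 : ∑ j, x j ≤ (n : ℝ) := by
      calc ∑ j, x j ≤ ∑ _j : Fin n, 1 := Finset.sum_le_sum fun j _ => (hx j).2
        _ = (n : ℝ) := by simp
    have h1' : (α / ((GI.neighborFinset i).card : ℝ)) * ∑ j ∈ GI.neighborFinset i, x j ≤ α := by
      calc (α / ((GI.neighborFinset i).card : ℝ)) * ∑ j ∈ GI.neighborFinset i, x j
          ≤ (α / ((GI.neighborFinset i).card : ℝ)) * ((GI.neighborFinset i).card : ℝ) :=
            mul_le_mul_of_nonneg_left h1 (div_nonneg hα0 hc.le)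
        _ = α := div_mul_cancel₀ _ hc.ne'
    have h2' : ((1 - α) / (n : ℝ)) * ∑ j, x j ≤ 1 - α := by
      calc ((1 - α) / (n : ℝ)) * ∑ j, x j ≤ ((1 - α) / (n : ℝ)) * (n : ℝ) :=
            mul_le_mul_of_nonneg_left h2 (div_nonneg (by linarith) hn.le)
        _ = 1 - α := div_mul_cancel₀ _ hn.ne'
    unfold infoAwareness
    linarith

end Aux


section Aux2
variable (n : ℕ) (GC GI : SimpleGraph (Fin n)) [DecidableRel GC.Adj] [DecidableRel GI.Adj]

lemma p01Dist_le_p01Bench (hGI : ∀ i, (GI.neighborFinset i).Nonempty)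
    (α β : ℝ) (hα0 : 0 ≤ α) (hα1 : α ≤ 1) (hβ : β ∈ Set.Ioo (0:ℝ) 1)
    (x : Fin n → ℝ) (hx : ∀ j, x j ∈ Set.Icc (0:ℝ) 1) (i : Fin n) :
    p01Dist n GC GI α β x i ≤ p01Bench n GC β x i := by
  have ha := infoAwareness_mem n GI hGI α hα0 hα1 x hx i
  have ha1 : distAction n GI α x i ≤ 1 := by
    unfold distAction; linarith [ha.1]
  have hprod : ∏ j ∈ GC.neighborFinset i, (1 - β * x j)
      ≤ ∏ j ∈ GC.neighborFinset i, (1 - β * distAction n GI α x i * x j) := by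
    apply Finset.prod_le_prod
    · intro j _
      have := (hx j).2
      nlinarith [hβ.1, hβ.2, (hx j).1]
    · intro j _
      have hx0 := (hx j).1
      have h1 : distAction n GI α x i * x j ≤ 1 * x j :=
        mul_le_mul_of_nonneg_right ha1 hx0
      nlinarith [hβ.1]
  unfold p01Dist p01Bench
  linarith
end Aux2

/-- if `q* ≻ 0` is a fixed point of the benchmark map `ψ` that strictly
dominates every other element of `ψ⁺ = {x ∈ [0,1]^n : ψ(x) ⪰ x}`, and `α ∈ [0,1)`, then
every nonzero fixed point `p*` of the distancing map `φ` in `[0,1]^n` satisfies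
`p* ≺ q*` componentwise. -/
theorem distancing_fixed_point_lt_benchmark
    (n : ℕ) (GC GI : SimpleGraph (Fin n)) [DecidableRel GC.Adj] [DecidableRel GI.Adj]
    (hconn : GC.Connected) (hGI : ∀ i, (GI.neighborFinset i).Nonempty)
    (α β δ : ℝ) (hα : α ∈ Set.Ico (0:ℝ) 1) (hβ : β ∈ Set.Ioo (0:ℝ) 1)
    (hδ : δ ∈ Set.Ioo (0:ℝ) 1)
    (q : Fin n → ℝ) (hq : ∀ i, q i ∈ Set.Icc (0:ℝ) 1) (hqpos : ∀ i, 0 < q i)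
    (hqfix : ∀ i, psiMap n GC β δ q i = q i)
    (hqmax : ∀ x : Fin n → ℝ, (∀ i, x i ∈ Set.Icc (0:ℝ) 1) →
      (∀ i, x i ≤ psiMap n GC β δ x i) → x ≠ q → ∀ i, x i < q i)
    (p : Fin n → ℝ) (hp : ∀ i, p i ∈ Set.Icc (0:ℝ) 1)
    (hpfix : ∀ i, phiMap n GC GI α β δ p i = p i) (hpne : p ≠ 0) :
    ∀ i, p i < q i := by
  
  intro i
  have hpsub : ∀ k, p k ≤ psiMap n GC β δ p k := by
    intro k
    have hle := p01Dist_le_p01Bench n GC GI hGI α β hα.1 hα.2.le hβ p hp k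
    have h1 : (0:ℝ) ≤ 1 - (1 - δ) * p k := by
      nlinarith [(hp k).2, (hp k).1, hδ.1, hδ.2]
    have hfx := hpfix k
    unfold phiMap at hfx
    unfold psiMap
    nlinarith [mul_le_mul_of_nonneg_left hle h1]
  have hpneq : p ≠ q := by
    intro h
    rw [h] at hpfix
    have hfq := hqfix i
    have hfp := hpfix i
    unfold psiMap at hfq
    unfold phiMap at hfp
    have hpos : (0:ℝ) < 1 - (1 - δ) * q i := by
      nlinarith [(hq i).2, (hq i).1, hδ.1, hδ.2]
    have hBD : p01Bench n GC β q i = p01Dist n GC GI α β q i :=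
      mul_left_cancel₀ hpos.ne' (by linarith)
    rcases (GC.neighborFinset i).eq_empty_or_nonempty with hemp | hne
    · have hB0 : p01Bench n GC β q i = 0 := by
        unfold p01Bench; rw [hemp]; simp
      rw [hB0] at hfq
      nlinarith [hqpos i, hδ.1]
    · have hsum : (0:ℝ) < ∑ j, q j :=
        Finset.sum_pos (fun j _ => hqpos j) ⟨i, Finset.mem_univ i⟩
      have hn : (0:ℝ) < n := by exact_mod_cast i.pos
      have hμ : 0 < infoAwareness n GI α q i := by
        have h2 : 0 < ((1 - α) / (n : ℝ)) * ∑ j, q j :=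
          mul_pos (div_pos (by linarith [hα.2]) hn) hsum
        have h1 : 0 ≤ (α / ((GI.neighborFinset i).card : ℝ)) *
            ∑ j ∈ GI.neighborFinset i, q j := by
          have hc : (0:ℝ) ≤ ((GI.neighborFinset i).card : ℝ) := by positivity
          exact mul_nonneg (div_nonneg hα.1 hc)
            (Finset.sum_nonneg fun j _ => (hqpos j).le)
        unfold infoAwareness; linarith
      have ha1 : distAction n GI α q i < 1 := by unfold distAction; linarith
      have hprod : ∏ j ∈ GC.neighborFinset i, (1 - β * q j)
          < ∏ j ∈ GC.neighborFinset i, (1 - β * distAction n GI α q i * q j) := by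
        apply Finset.prod_lt_prod_of_nonempty _ _ hne
        · intro j _
          nlinarith [(hq j).2, (hq j).1, hβ.1, hβ.2]
        · intro j _
          have h1 : distAction n GI α q i * q j < 1 * q j :=
            mul_lt_mul_of_pos_right ha1 (hqpos j)
          nlinarith [hβ.1]
      unfold p01Bench p01Dist at hBD
      linarith
  exact hqmax p hp hpsub hpneq i
end

section
/- For every x ∈ [0,1]^n, φ(x) ⪯ ψ(x) componentwise; consequently the set φ⁺ = {x ∈ [0,1]^n : φ(x) ⪰ x} is contained in ψ⁺ = {x ∈ [0,1]^n : ψ(x) ⪰ x}. -/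
open Finset Filter Topology Matrix

/-- on `[0,1]^n` the distancing map is componentwise below the benchmark
map, `φ(x) ⪯ ψ(x)`; consequently `φ⁺ = {x ∈ [0,1]^n : φ(x) ⪰ x}` is contained in
`ψ⁺ = {x ∈ [0,1]^n : ψ(x) ⪰ x}`. -/
theorem phi_le_psi_and_phiPlus_subset_psiPlus
    (n : ℕ) (hn : 0 < n) (GC GI : SimpleGraph (Fin n)) [DecidableRel GC.Adj] [DecidableRel GI.Adj]
    (hGI : ∀ i, (GI.neighborFinset i).Nonempty)
    (α β δ : ℝ) (hα : α ∈ Set.Icc (0:ℝ) 1) (hβ : β ∈ Set.Ioo (0:ℝ) 1)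
    (hδ : δ ∈ Set.Ioo (0:ℝ) 1) :
    (∀ x : Fin n → ℝ, (∀ i, x i ∈ Set.Icc (0:ℝ) 1) →
      ∀ i, phiMap n GC GI α β δ x i ≤ psiMap n GC β δ x i) ∧
    {x : Fin n → ℝ | (∀ i, x i ∈ Set.Icc (0:ℝ) 1) ∧ ∀ i, x i ≤ phiMap n GC GI α β δ x i} ⊆
      {x : Fin n → ℝ | (∀ i, x i ∈ Set.Icc (0:ℝ) 1) ∧ ∀ i, x i ≤ psiMap n GC β δ x i} := by
  have key : ∀ x : Fin n → ℝ, (∀ i, x i ∈ Set.Icc (0:ℝ) 1) →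
      ∀ i, phiMap n GC GI α β δ x i ≤ psiMap n GC β δ x i := by
    intro x hx i
    obtain ⟨hα0, hα1⟩ := hα
    obtain ⟨hβ0, hβ1⟩ := hβ
    -- μ ∈ [0,1]
    have hcard : (0:ℝ) < ((GI.neighborFinset i).card : ℝ) := by
      have := (hGI i).card_pos
      exact_mod_cast this
    have hsum1 : ∑ j ∈ GI.neighborFinset i, x j ≤ ((GI.neighborFinset i).card : ℝ) := by
      calc ∑ j ∈ GI.neighborFinset i, x j ≤ ∑ _j ∈ GI.neighborFinset i, (1:ℝ) :=
            Finset.sum_le_sum (fun j _ => (hx j).2)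
        _ = ((GI.neighborFinset i).card : ℝ) := by simp
    have hsum1' : (0:ℝ) ≤ ∑ j ∈ GI.neighborFinset i, x j :=
      Finset.sum_nonneg (fun j _ => (hx j).1)
    have hsum2 : ∑ j, x j ≤ (n : ℝ) := by
      calc ∑ j, x j ≤ ∑ _j : Fin n, (1:ℝ) := Finset.sum_le_sum (fun j _ => (hx j).2)
        _ = (n : ℝ) := by simp
    have hsum2' : (0:ℝ) ≤ ∑ j, x j := Finset.sum_nonneg (fun j _ => (hx j).1)
    have hn' : (0:ℝ) < (n:ℝ) := by exact_mod_cast hn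
    have hμ0 : 0 ≤ infoAwareness n GI α x i := by
      unfold infoAwareness
      have h1 : 0 ≤ (α / ((GI.neighborFinset i).card : ℝ)) * ∑ j ∈ GI.neighborFinset i, x j :=
        mul_nonneg (div_nonneg hα0 hcard.le) hsum1'
      have h2 : 0 ≤ ((1 - α) / (n:ℝ)) * ∑ j, x j :=
        mul_nonneg (div_nonneg (by linarith) hn'.le) hsum2'
      linarith
    have hμ1 : infoAwareness n GI α x i ≤ 1 := by
      unfold infoAwareness
      have h1 : (α / ((GI.neighborFinset i).card : ℝ)) * ∑ j ∈ GI.neighborFinset i, x j ≤ α := by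
        rw [div_mul_eq_mul_div, div_le_iff₀ hcard]
        calc α * ∑ j ∈ GI.neighborFinset i, x j
            ≤ α * ((GI.neighborFinset i).card : ℝ) := by
              exact mul_le_mul_of_nonneg_left hsum1 hα0
          _ = _ := rfl
      have h2 : ((1 - α) / (n:ℝ)) * ∑ j, x j ≤ 1 - α := by
        rw [div_mul_eq_mul_div, div_le_iff₀ hn']
        exact mul_le_mul_of_nonneg_left hsum2 (by linarith)
      linarith
    have ha0 : 0 ≤ distAction n GI α x i := by unfold distAction; linarith
    have ha1 : distAction n GI α x i ≤ 1 := by unfold distAction; linarith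
    -- product comparison
    have hprod : ∏ j ∈ GC.neighborFinset i, (1 - β * x j) ≤
        ∏ j ∈ GC.neighborFinset i, (1 - β * distAction n GI α x i * x j) := by
      apply Finset.prod_le_prod
      · intro j _
        have := (hx j).2
        have := (hx j).1
        nlinarith
      · intro j _
        have hxj0 := (hx j).1
        nlinarith [mul_nonneg hβ0.le hxj0, mul_le_of_le_one_left (mul_nonneg hβ0.le hxj0) ha1]
    have hp : p01Dist n GC GI α β x i ≤ p01Bench n GC β x i := by
      unfold p01Dist p01Bench
      linarith
    have hcoef : 0 ≤ 1 - (1 - δ) * x i := by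
      obtain ⟨hδ0, hδ1⟩ := hδ
      have hx0 := (hx i).1
      have hx1 := (hx i).2
      nlinarith
    unfold phiMap psiMap
    have := mul_le_mul_of_nonneg_left hp hcoef
    linarith
  refine ⟨key, ?_⟩
  intro x hx
  exact ⟨hx.1, fun i => le_trans (hx.2 i) (key x hx.1 i)⟩
end

section
/- For all x, y ∈ Ω = {0,1}^n with x ⪯ y, the product function φ^{x,y}(ω, ω') = ∏_{i=1}^n φ_i^{x,y}(ω_i, ω'_i) is a monotone coupling of the distancing transition law K_d(x,·) and the benchmark transition law K(y,·) on (Ω, ⪯): Σ_{ω' ⪰ ω} φ^{x,y}(ω, ω') = K_d(x, ω) and Σ_{ω' ⪯ ω} φ^{x,y}(ω', ω) = K(y, ω) for all ω ∈ Ω, and φ^{x,y}(ω, ω') = 0 unless ω ⪯ ω'. -/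
open Finset Filter Topology Matrix

/-- A probability mass function on a countable (or arbitrary) type. -/
def IsPMF {X : Type*} (p : X → ℝ) : Prop := (∀ x, 0 ≤ p x) ∧ HasSum p 1

/-- `p` is a monotone coupling of the probability mass functions `p1` and `p2` on the
partially ordered set `X`: it is a pmf on `X × X` vanishing off `{(x,y) : x ⪯ y}` whose
first marginal is `p1` and second marginal is `p2`. -/
def IsMonotoneCoupling {X : Type*} [PartialOrder X] (p : X × X → ℝ) (p1 p2 : X → ℝ) : Prop :=
  IsPMF p ∧ IsPMF p1 ∧ IsPMF p2 ∧
  (∀ x y : X, ¬ x ≤ y → p (x, y) = 0) ∧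
  (∀ x, ∑' y, p (x, y) = p1 x) ∧
  (∀ y, ∑' x, p (x, y) = p2 y)

noncomputable section

/-- Embedding of a binary epidemic state into `[0,1]^n`. -/
def stateVec (n : ℕ) (s : Fin n → Bool) : Fin n → ℝ := fun j => if s j then 1 else 0

/-- Benchmark node-level transition probabilities `ℙ_i(s, ·)` on `{0,1}`. -/
def nodeBench (n : ℕ) (GC : SimpleGraph (Fin n)) [DecidableRel GC.Adj] (β δ : ℝ)
    (s : Fin n → Bool) (i : Fin n) : Bool → ℝ := fun b =>
  if s i then
    (if b then 1 - δ * (1 - p01Bench n GC β (stateVec n s) i)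
     else δ * (1 - p01Bench n GC β (stateVec n s) i))
  else
    (if b then p01Bench n GC β (stateVec n s) i
     else 1 - p01Bench n GC β (stateVec n s) i)

/-- Distancing node-level transition probabilities `ℙ_i^d(s, ·)` on `{0,1}`. -/
def nodeDist (n : ℕ) (GC GI : SimpleGraph (Fin n)) [DecidableRel GC.Adj] [DecidableRel GI.Adj]
    (α β δ : ℝ) (s : Fin n → Bool) (i : Fin n) : Bool → ℝ := fun b =>
  if s i then
    (if b then 1 - δ * (1 - p01Dist n GC GI α β (stateVec n s) i)
     else δ * (1 - p01Dist n GC GI α β (stateVec n s) i))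
  else
    (if b then p01Dist n GC GI α β (stateVec n s) i
     else 1 - p01Dist n GC GI α β (stateVec n s) i)

/-- Benchmark Markov transition matrix `K(s,s') = ∏ i, ℙ_i(s, s'_i)`. -/
def Kbench (n : ℕ) (GC : SimpleGraph (Fin n)) [DecidableRel GC.Adj] (β δ : ℝ)
    (s s' : Fin n → Bool) : ℝ := ∏ i, nodeBench n GC β δ s i (s' i)

/-- Distancing Markov transition matrix `K_d(s,s') = ∏ i, ℙ_i^d(s, s'_i)`. -/
def Kdist (n : ℕ) (GC GI : SimpleGraph (Fin n)) [DecidableRel GC.Adj] [DecidableRel GI.Adj]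
    (α β δ : ℝ) (s s' : Fin n → Bool) : ℝ := ∏ i, nodeDist n GC GI α β δ s i (s' i)

/-- Node-level coupling `φ_i^{x,y}` of `ℙ_i^d(x,·)` and `ℙ_i(y,·)`, for `x ⪯ y`.
(The case `x_i = 1, y_i = 0` cannot occur when `x ⪯ y`; it is assigned `0`.) -/
def nodeCouple (n : ℕ) (GC GI : SimpleGraph (Fin n)) [DecidableRel GC.Adj] [DecidableRel GI.Adj]
    (α β δ : ℝ) (x y : Fin n → Bool) (i : Fin n) : Bool × Bool → ℝ := fun ab =>
  match x i, y i, ab.1, ab.2 with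
  | true, true, false, false =>
      δ * (1 - p01Bench n GC β (stateVec n y) i)
  | true, true, false, true =>
      δ * (p01Bench n GC β (stateVec n y) i - p01Dist n GC GI α β (stateVec n x) i)
  | true, true, true, false => 0
  | true, true, true, true =>
      1 - δ * (1 - p01Dist n GC GI α β (stateVec n x) i)
  | false, false, false, false =>
      1 - p01Bench n GC β (stateVec n y) i
  | false, false, false, true =>
      p01Bench n GC β (stateVec n y) i - p01Dist n GC GI α β (stateVec n x) i
  | false, false, true, false => 0
  | false, false, true, true =>
      p01Dist n GC GI α β (stateVec n x) i
  | false, true, false, false =>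
      δ * (1 - p01Bench n GC β (stateVec n y) i)
  | false, true, false, true =>
      1 - p01Dist n GC GI α β (stateVec n x) i - δ * (1 - p01Bench n GC β (stateVec n y) i)
  | false, true, true, false => 0
  | false, true, true, true =>
      p01Dist n GC GI α β (stateVec n x) i
  | true, false, _, _ => 0

/-- State-level coupling `φ^{x,y}(ω,ω') = ∏ i, φ_i^{x,y}(ω_i, ω'_i)`. -/
def stateCouple (n : ℕ) (GC GI : SimpleGraph (Fin n)) [DecidableRel GC.Adj] [DecidableRel GI.Adj]
    (α β δ : ℝ) (x y : Fin n → Bool) (ω ω' : Fin n → Bool) : ℝ :=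
  ∏ i, nodeCouple n GC GI α β δ x y i (ω i, ω' i)

end

section AuxLemmas
open Finset

lemma stateVec_nonneg (n : ℕ) (s : Fin n → Bool) (j : Fin n) : 0 ≤ stateVec n s j := by
  unfold stateVec; positivity

lemma stateVec_le_one (n : ℕ) (s : Fin n → Bool) (j : Fin n) : stateVec n s j ≤ 1 := by
  unfold stateVec; split <;> norm_num

lemma distAction_mem (n : ℕ) (hn : 0 < n) (GI : SimpleGraph (Fin n)) [DecidableRel GI.Adj]
    (hGI : ∀ i, (GI.neighborFinset i).Nonempty) (α : ℝ) (hα0 : 0 ≤ α) (hα1 : α ≤ 1)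
    (s : Fin n → Bool) (i : Fin n) :
    0 ≤ distAction n GI α (stateVec n s) i ∧ distAction n GI α (stateVec n s) i ≤ 1 := by
  have hc : (0:ℝ) < ((GI.neighborFinset i).card : ℝ) := by
    exact_mod_cast Finset.card_pos.mpr (hGI i)
  have hnR : (0:ℝ) < (n : ℝ) := by exact_mod_cast hn
  set c : ℝ := ((GI.neighborFinset i).card : ℝ) with hcdef
  have hS1nn : 0 ≤ ∑ j ∈ GI.neighborFinset i, stateVec n s j :=
    Finset.sum_nonneg fun j _ => stateVec_nonneg n s j
  have hS1le : ∑ j ∈ GI.neighborFinset i, stateVec n s j ≤ c := by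
    calc ∑ j ∈ GI.neighborFinset i, stateVec n s j ≤ ∑ j ∈ GI.neighborFinset i, 1 :=
          Finset.sum_le_sum fun j _ => stateVec_le_one n s j
      _ = c := by simp [hcdef]
  have hS2nn : 0 ≤ ∑ j, stateVec n s j := Finset.sum_nonneg fun j _ => stateVec_nonneg n s j
  have hS2le : ∑ j, stateVec n s j ≤ (n : ℝ) := by
    calc ∑ j, stateVec n s j ≤ ∑ _j : Fin n, (1:ℝ) :=
          Finset.sum_le_sum fun j _ => stateVec_le_one n s j
      _ = (n : ℝ) := by simp
  have h1 : (α / c) * ∑ j ∈ GI.neighborFinset i, stateVec n s j ≤ α := by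
    calc (α / c) * ∑ j ∈ GI.neighborFinset i, stateVec n s j ≤ (α/c) * c :=
          mul_le_mul_of_nonneg_left hS1le (div_nonneg hα0 hc.le)
      _ = α := div_mul_cancel₀ α hc.ne'
  have h2 : ((1-α) / n) * ∑ j, stateVec n s j ≤ 1 - α := by
    calc ((1-α) / n) * ∑ j, stateVec n s j ≤ ((1-α)/n) * n :=
          mul_le_mul_of_nonneg_left hS2le (div_nonneg (by linarith) hnR.le)
      _ = 1 - α := div_mul_cancel₀ _ hnR.ne'
  have h3 : 0 ≤ (α / c) * ∑ j ∈ GI.neighborFinset i, stateVec n s j :=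
    mul_nonneg (div_nonneg hα0 hc.le) hS1nn
  have h4 : 0 ≤ ((1-α) / n) * ∑ j, stateVec n s j :=
    mul_nonneg (div_nonneg (by linarith) hnR.le) hS2nn
  unfold distAction infoAwareness
  constructor <;> [linarith; linarith]

lemma p01_bounds (n : ℕ) (hn : 0 < n) (GC GI : SimpleGraph (Fin n))
    [DecidableRel GC.Adj] [DecidableRel GI.Adj]
    (hGI : ∀ i, (GI.neighborFinset i).Nonempty)
    (α β : ℝ) (hα0 : 0 ≤ α) (hα1 : α ≤ 1) (hβ0 : 0 ≤ β) (hβ1 : β ≤ 1)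
    (x y : Fin n → Bool) (hxy : x ≤ y) (i : Fin n) :
    0 ≤ p01Dist n GC GI α β (stateVec n x) i ∧
    p01Dist n GC GI α β (stateVec n x) i ≤ p01Bench n GC β (stateVec n y) i ∧
    p01Bench n GC β (stateVec n y) i ≤ 1 ∧ 0 ≤ p01Bench n GC β (stateVec n y) i := by
  obtain ⟨ha0, ha1⟩ := distAction_mem n hn GI hGI α hα0 hα1 x i
  set a : ℝ := distAction n GI α (stateVec n x) i with hadef
  have hf0 : ∀ j ∈ GC.neighborFinset i, 0 ≤ 1 - β * stateVec n y j := by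
    intro j _
    have := stateVec_le_one n y j; have := stateVec_nonneg n y j; nlinarith
  have hfg : ∀ j ∈ GC.neighborFinset i,
      1 - β * stateVec n y j ≤ 1 - β * a * stateVec n x j := by
    intro j _
    have hxyj : x j ≤ y j := hxy j
    by_cases hxj : x j = true
    · have hyj : y j = true := by
        cases hy : y j
        · rw [hxj, hy] at hxyj; exact absurd hxyj (by decide)
        · rfl
      simp only [stateVec, hxj, hyj, if_true]
      nlinarith
    · have hx0 : stateVec n x j = 0 := by simp [stateVec, hxj]
      have := stateVec_nonneg n y j
      rw [hx0]; nlinarith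
  have hg1 : ∀ j ∈ GC.neighborFinset i, 1 - β * a * stateVec n x j ≤ 1 := by
    intro j _
    have h := mul_nonneg (mul_nonneg hβ0 ha0) (stateVec_nonneg n x j)
    linarith
  have hg0 : ∀ j ∈ GC.neighborFinset i, 0 ≤ 1 - β * a * stateVec n x j :=
    fun j hj => le_trans (hf0 j hj) (hfg j hj)
  have hprod1 : ∏ j ∈ GC.neighborFinset i, (1 - β * a * stateVec n x j) ≤ 1 :=
    Finset.prod_le_one hg0 hg1
  have hprod2 : ∏ j ∈ GC.neighborFinset i, (1 - β * stateVec n y j) ≤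
      ∏ j ∈ GC.neighborFinset i, (1 - β * a * stateVec n x j) :=
    Finset.prod_le_prod hf0 hfg
  have hprod3 : 0 ≤ ∏ j ∈ GC.neighborFinset i, (1 - β * stateVec n y j) :=
    Finset.prod_nonneg hf0
  have hprod4 : ∏ j ∈ GC.neighborFinset i, (1 - β * stateVec n y j) ≤ 1 :=
    Finset.prod_le_one hf0 (fun j hj => by have := stateVec_nonneg n y j; nlinarith)
  unfold p01Dist p01Bench
  rw [← hadef]
  refine ⟨by linarith, by linarith, by linarith, by linarith⟩

variable {n : ℕ} {GC GI : SimpleGraph (Fin n)} [DecidableRel GC.Adj] [DecidableRel GI.Adj]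
  {α β δ : ℝ} {x y : Fin n → Bool}

lemma nodeCouple_nonneg (hδ0 : 0 ≤ δ) (hδ1 : δ ≤ 1) (i : Fin n)
    (hq0 : 0 ≤ p01Dist n GC GI α β (stateVec n x) i)
    (hqp : p01Dist n GC GI α β (stateVec n x) i ≤ p01Bench n GC β (stateVec n y) i)
    (hp1 : p01Bench n GC β (stateVec n y) i ≤ 1)
    (ab : Bool × Bool) : 0 ≤ nodeCouple n GC GI α β δ x y i ab := by
  obtain ⟨a, b⟩ := ab
  unfold nodeCouple
  cases hxi : x i <;> cases hyi : y i <;> cases a <;> cases b <;> simp <;> nlinarith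

lemma nodeCouple_mono (i : Fin n) :
    nodeCouple n GC GI α β δ x y i (true, false) = 0 := by
  unfold nodeCouple
  cases hxi : x i <;> cases hyi : y i <;> simp

lemma nodeCouple_margin_fst (i : Fin n) (hxyi : x i ≤ y i) (a : Bool) :
    nodeCouple n GC GI α β δ x y i (a, false) + nodeCouple n GC GI α β δ x y i (a, true) =
      nodeDist n GC GI α β δ x i a := by
  unfold nodeCouple nodeDist
  cases hxi : x i <;> cases hyi : y i <;> cases a <;> simp_all <;>
    first | exact absurd hxyi (by decide) | ring1

lemma nodeCouple_margin_snd (i : Fin n) (hxyi : x i ≤ y i) (b : Bool) :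
    nodeCouple n GC GI α β δ x y i (false, b) + nodeCouple n GC GI α β δ x y i (true, b) =
      nodeBench n GC β δ y i b := by
  unfold nodeCouple nodeBench
  cases hxi : x i <;> cases hyi : y i <;> cases b <;> simp_all <;>
    first | exact absurd hxyi (by decide) | ring1

lemma nodeDist_sum (i : Fin n) :
    nodeDist n GC GI α β δ x i false + nodeDist n GC GI α β δ x i true = 1 := by
  unfold nodeDist; cases hxi : x i <;> simp

lemma nodeBench_sum (i : Fin n) :
    nodeBench n GC β δ y i false + nodeBench n GC β δ y i true = 1 := by
  unfold nodeBench; cases hyi : y i <;> simp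

lemma nodeDist_nonneg (hδ0 : 0 ≤ δ) (hδ1 : δ ≤ 1) (i : Fin n)
    (hq0 : 0 ≤ p01Dist n GC GI α β (stateVec n x) i)
    (hq1 : p01Dist n GC GI α β (stateVec n x) i ≤ 1) (b : Bool) :
    0 ≤ nodeDist n GC GI α β δ x i b := by
  unfold nodeDist; cases hxi : x i <;> cases b <;> simp <;> nlinarith

lemma nodeBench_nonneg (hδ0 : 0 ≤ δ) (hδ1 : δ ≤ 1) (i : Fin n)
    (hp0 : 0 ≤ p01Bench n GC β (stateVec n y) i)
    (hp1 : p01Bench n GC β (stateVec n y) i ≤ 1) (b : Bool) :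
    0 ≤ nodeBench n GC β δ y i b := by
  unfold nodeBench; cases hyi : y i <;> cases b <;> simp <;> nlinarith

end AuxLemmas

/-- for binary states `x ⪯ y`, the product `φ^{x,y}(ω,ω') = ∏ i,
φ_i^{x,y}(ω_i,ω'_i)` is a monotone coupling of the distancing transition law `K_d(x,·)`
and the benchmark transition law `K(y,·)` on `Ω = {0,1}^n` with the componentwise order;
in particular `φ^{x,y}(ω,ω') = 0` unless `ω ⪯ ω'`, and the restricted marginal sums
`Σ_{ω' ⪰ ω} φ^{x,y}(ω,ω') = K_d(x,ω)` and `Σ_{ω' ⪯ ω} φ^{x,y}(ω',ω) = K(y,ω)` hold. -/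
theorem stateCouple_is_monotone_coupling
    (n : ℕ) (hn : 0 < n) (GC GI : SimpleGraph (Fin n)) [DecidableRel GC.Adj] [DecidableRel GI.Adj]
    (hGI : ∀ i, (GI.neighborFinset i).Nonempty)
    (α β δ : ℝ) (hα : α ∈ Set.Icc (0:ℝ) 1) (hβ : β ∈ Set.Ioo (0:ℝ) 1)
    (hδ : δ ∈ Set.Ioo (0:ℝ) 1)
    (x y : Fin n → Bool) (hxy : x ≤ y) :
    IsMonotoneCoupling (fun ωω' : (Fin n → Bool) × (Fin n → Bool) =>
        stateCouple n GC GI α β δ x y ωω'.1 ωω'.2)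
      (Kdist n GC GI α β δ x) (Kbench n GC β δ y) ∧
    (∀ ω ω' : Fin n → Bool, ¬ ω ≤ ω' → stateCouple n GC GI α β δ x y ω ω' = 0) ∧
    (∀ ω : Fin n → Bool,
      ∑' ω' : {ω' : Fin n → Bool // ω ≤ ω'}, stateCouple n GC GI α β δ x y ω ω'.1 =
        Kdist n GC GI α β δ x ω) ∧
    (∀ ω : Fin n → Bool,
      ∑' ω' : {ω' : Fin n → Bool // ω' ≤ ω}, stateCouple n GC GI α β δ x y ω'.1 ω =
        Kbench n GC β δ y ω) := by
  obtain ⟨hα0, hα1⟩ := hα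
  obtain ⟨hβ0, hβ1⟩ := hβ
  obtain ⟨hδ0, hδ1⟩ := hδ
  have hb := fun i => p01_bounds n hn GC GI hGI α β hα0 hα1 hβ0.le hβ1.le x y hxy i
  have hnn : ∀ i ab, 0 ≤ nodeCouple n GC GI α β δ x y i ab := fun i ab =>
    nodeCouple_nonneg hδ0.le hδ1.le i (hb i).1 (hb i).2.1 (hb i).2.2.1 ab
  have hq1 : ∀ i, p01Dist n GC GI α β (stateVec n x) i ≤ 1 := fun i =>
    le_trans (hb i).2.1 (hb i).2.2.1
  have hSCnn : ∀ ω ω', 0 ≤ stateCouple n GC GI α β δ x y ω ω' := fun ω ω' =>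
    Finset.prod_nonneg fun i _ => hnn i _
  -- first marginal (full sum)
  have key1 : ∀ ω, ∑ ω' : Fin n → Bool, stateCouple n GC GI α β δ x y ω ω' =
      Kdist n GC GI α β δ x ω := by
    intro ω
    unfold stateCouple Kdist
    have hps := Finset.prod_univ_sum (fun _ : Fin n => (Finset.univ : Finset Bool))
      (fun i b => nodeCouple n GC GI α β δ x y i (ω i, b))
    rw [Fintype.piFinset_univ] at hps
    rw [← hps]
    refine Finset.prod_congr rfl fun i _ => ?_
    rw [Fintype.sum_bool, add_comm]
    exact nodeCouple_margin_fst i (hxy i) (ω i)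
  -- second marginal (full sum)
  have key2 : ∀ ω, ∑ ω' : Fin n → Bool, stateCouple n GC GI α β δ x y ω' ω =
      Kbench n GC β δ y ω := by
    intro ω
    unfold stateCouple Kbench
    have hps := Finset.prod_univ_sum (fun _ : Fin n => (Finset.univ : Finset Bool))
      (fun i b => nodeCouple n GC GI α β δ x y i (b, ω i))
    rw [Fintype.piFinset_univ] at hps
    rw [← hps]
    refine Finset.prod_congr rfl fun i _ => ?_
    rw [Fintype.sum_bool, add_comm]
    exact nodeCouple_margin_snd i (hxy i) (ω i)
  -- total masses
  have keyd : ∑ ω : Fin n → Bool, Kdist n GC GI α β δ x ω = 1 := by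
    unfold Kdist
    have hps := Finset.prod_univ_sum (fun _ : Fin n => (Finset.univ : Finset Bool))
      (fun i b => nodeDist n GC GI α β δ x i b)
    rw [Fintype.piFinset_univ] at hps
    rw [← hps]
    refine Finset.prod_eq_one fun i _ => ?_
    rw [Fintype.sum_bool, add_comm]
    exact nodeDist_sum i
  have keyb : ∑ ω : Fin n → Bool, Kbench n GC β δ y ω = 1 := by
    unfold Kbench
    have hps := Finset.prod_univ_sum (fun _ : Fin n => (Finset.univ : Finset Bool))
      (fun i b => nodeBench n GC β δ y i b)
    rw [Fintype.piFinset_univ] at hps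
    rw [← hps]
    refine Finset.prod_eq_one fun i _ => ?_
    rw [Fintype.sum_bool, add_comm]
    exact nodeBench_sum i
  -- vanishing off the order
  have vanish : ∀ ω ω' : Fin n → Bool, ¬ ω ≤ ω' → stateCouple n GC GI α β δ x y ω ω' = 0 := by
    intro ω ω' h
    have h' : ¬ ∀ i, ω i ≤ ω' i := fun hall => h hall
    obtain ⟨i, hi⟩ := not_forall.mp h'
    have h1 : ω i = true ∧ ω' i = false := by
      revert hi; cases ω i <;> cases ω' i <;> decide
    unfold stateCouple
    refine Finset.prod_eq_zero (Finset.mem_univ i) ?_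
    rw [h1.1, h1.2]
    exact nodeCouple_mono i
  have htot : ∑ p : (Fin n → Bool) × (Fin n → Bool),
      stateCouple n GC GI α β δ x y p.1 p.2 = 1 := by
    rw [Fintype.sum_prod_type]
    calc ∑ ω, ∑ ω', stateCouple n GC GI α β δ x y ω ω'
        = ∑ ω, Kdist n GC GI α β δ x ω := Finset.sum_congr rfl fun ω _ => key1 ω
      _ = 1 := keyd
  have hKdnn : ∀ ω, 0 ≤ Kdist n GC GI α β δ x ω := fun ω =>
    Finset.prod_nonneg fun i _ => nodeDist_nonneg hδ0.le hδ1.le i (hb i).1 (hq1 i) _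
  have hKbnn : ∀ ω, 0 ≤ Kbench n GC β δ y ω := fun ω =>
    Finset.prod_nonneg fun i _ => nodeBench_nonneg hδ0.le hδ1.le i (hb i).2.2.2 (hb i).2.2.1 _
  -- restricted sums
  have sumA : ∀ ω : Fin n → Bool,
      ∑' ω' : {ω' : Fin n → Bool // ω ≤ ω'}, stateCouple n GC GI α β δ x y ω ω'.1 =
        Kdist n GC GI α β δ x ω := by
    intro ω
    haveI : DecidablePred fun ω' : Fin n → Bool => ω ≤ ω' := fun ω' =>
      decidable_of_iff (∀ i, ω i ≤ ω' i) Iff.rfl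
    rw [tsum_fintype]
    rw [← Finset.sum_subtype (Finset.univ.filter fun ω' : Fin n → Bool => ω ≤ ω')
      (fun ω' => by simp) (fun ω' => stateCouple n GC GI α β δ x y ω ω')]
    rw [← key1 ω]
    refine Finset.sum_subset (Finset.filter_subset _ _) ?_
    intro ω' _ hω'
    have : ¬ ω ≤ ω' := by
      intro hle; exact hω' (Finset.mem_filter.mpr ⟨Finset.mem_univ _, hle⟩)
    exact vanish ω ω' this
  have sumB : ∀ ω : Fin n → Bool,
      ∑' ω' : {ω' : Fin n → Bool // ω' ≤ ω}, stateCouple n GC GI α β δ x y ω'.1 ω =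
        Kbench n GC β δ y ω := by
    intro ω
    haveI : DecidablePred fun ω' : Fin n → Bool => ω' ≤ ω := fun ω' =>
      decidable_of_iff (∀ i, ω' i ≤ ω i) Iff.rfl
    rw [tsum_fintype]
    rw [← Finset.sum_subtype (Finset.univ.filter fun ω' : Fin n → Bool => ω' ≤ ω)
      (fun ω' => by simp) (fun ω' => stateCouple n GC GI α β δ x y ω' ω)]
    rw [← key2 ω]
    refine Finset.sum_subset (Finset.filter_subset _ _) ?_
    intro ω' _ hω'
    have : ¬ ω' ≤ ω := by
      intro hle; exact hω' (Finset.mem_filter.mpr ⟨Finset.mem_univ _, hle⟩)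
    exact vanish ω' ω this
  refine ⟨⟨⟨fun p => hSCnn p.1 p.2, htot ▸ hasSum_fintype _⟩,
      ⟨hKdnn, keyd ▸ hasSum_fintype _⟩, ⟨hKbnn, keyb ▸ hasSum_fintype _⟩,
      fun ω ω' h => vanish ω ω' h, ?_, ?_⟩, vanish, sumA, sumB⟩
  · intro ω
    rw [tsum_fintype]
    exact key1 ω
  · intro ω
    rw [tsum_fintype]
    exact key2 ω
end
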